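/- arXiv:2012.06323 — 4 statements merged into one kernel-verified Lean document; each statement's English description precedes it below -/
import Mathlib

section
/- (Cauchy–Bunyakovskii–Gowers–Schwarz inequality.) Let d ≥ 1, C_d = {0,1}^d, and for each c ∈ C_d let f_c : ℤ → ℂ be a finitely supported function. Then |⟨(f_c)_{c ∈ C_d}⟩_{U^d(ℤ)}| ≤ ∏_{c ∈ C_d} (⟨(f_c, …, f_c)⟩_{U^d(ℤ)})^{1/2^d}; in particular, each ⟨(f_c, …, f_c)⟩_{U^d(ℤ)} is a nonnegative real number. -/
/-!
Split the cube `{0,1}^d` along a coordinate `j`. Writing `h = (h_j, h')` and substituting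
`y = x + h_j` turns `⟨(f_c)_c⟩` into `∑_{h'} A₀(h') · conj A₁(h')`, where `A_ε(h')` is the sum over
`x` of the part of the product indexed by the face `c_j = ε`. If both faces carry the same
functions this is `∑_{h'} |A_ε(h')|² ≥ 0`, and in general Cauchy–Schwarz gives
`|⟨f⟩|² ≤ ⟨f with face 0 doubled⟩ · ⟨f with face 1 doubled⟩`. Doing this for every coordinate in
turn bounds `|⟨f⟩|^{2^d}` by `∏_c ⟨f_c, …, f_c⟩`. Finite support reduces every sum to a finite
box: `x ∈ T` and `h ∈ (T - T)^d`, where `T` contains all the supports.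
-/

open scoped ComplexConjugate

/-- The Gowers inner product `⟨(f_c)_{c ∈ {0,1}^d}⟩_{U^d(ℤ)}` of a family of finitely
supported functions `f c : ℤ → ℂ`:
`∑_{x ∈ ℤ} ∑_{h ∈ ℤ^d} ∏_{c ∈ {0,1}^d} 𝒞^{|c|} f_c (x + c·h)`, where `𝒞` is complex
conjugation and `|c|` is the number of ones in `c`. -/
noncomputable def gowersInner (d : ℕ) (f : (Fin d → Bool) → ℤ → ℂ) : ℂ :=
  ∑' x : ℤ, ∑' h : Fin d → ℤ, ∏ c : Fin d → Bool,
    (if Even (Finset.univ.filter (fun i => c i = true)).card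
      then f c (x + ∑ i, if c i then h i else 0)
      else conj (f c (x + ∑ i, if c i then h i else 0)))

open Finset Function Equiv
open scoped Pointwise ComplexOrder

lemma norm_sum_mul_conj_sq_le {α : Type*} (s : Finset α) (a b : α → ℂ) :
    ‖∑ i ∈ s, a i * conj (b i)‖ ^ 2 ≤ (∑ i ∈ s, ‖a i‖ ^ 2) * ∑ i ∈ s, ‖b i‖ ^ 2 :=
  calc ‖∑ i ∈ s, a i * conj (b i)‖ ^ 2 ≤ (∑ i ∈ s, ‖a i‖ * ‖b i‖) ^ 2 := by
        gcongr; exact (norm_sum_le _ _).trans_eq (by simp)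
    _ ≤ _ := sum_mul_sq_le_sq_mul_sq _ _ _

section FunSplitAt

variable {ι α : Type*} [DecidableEq ι]

@[simp]
lemma funSplitAt_symm_apply_self (j : ι) (p : α × ({i // i ≠ j} → α)) :
    (funSplitAt j α).symm p j = p.1 :=
  congrArg Prod.fst ((funSplitAt j α).apply_symm_apply p)

@[simp]
lemma funSplitAt_symm_apply_coe (j : ι) (p : α × ({i // i ≠ j} → α)) (i : {i // i ≠ j}) :
    (funSplitAt j α).symm p i = p.2 i :=
  congrFun (congrArg Prod.snd ((funSplitAt j α).apply_symm_apply p)) i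

lemma update_funSplitAt_symm (j : ι) (a b : α) (c : {i // i ≠ j} → α) :
    update ((funSplitAt j α).symm (a, c)) j b = (funSplitAt j α).symm (b, c) := by
  apply (funSplitAt j α).injective
  ext i
  · simp [funSplitAt_apply]
  · simp only [funSplitAt_apply, update_of_ne i.2, funSplitAt_symm_apply_coe]

lemma funSplitAt_symm_mem_piFinset_iff [Fintype ι] (j : ι) (D : Finset α)
    (p : α × ({i // i ≠ j} → α)) :
    (funSplitAt j α).symm p ∈ Fintype.piFinset (fun _ => D) ↔
      p ∈ D ×ˢ Fintype.piFinset (fun _ => D) := by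
  simp only [Fintype.mem_piFinset, mem_product]
  constructor
  · intro hp
    exact ⟨funSplitAt_symm_apply_self j p ▸ hp j, fun i => funSplitAt_symm_apply_coe j p i ▸ hp i⟩
  · rintro ⟨h₁, h₂⟩ i
    obtain rfl | hi := eq_or_ne i j
    · rwa [funSplitAt_symm_apply_self]
    · exact (funSplitAt_symm_apply_coe j p ⟨i, hi⟩).symm ▸ h₂ ⟨i, hi⟩

def face {β : Type*} (j : ι) (a : α) (f : (ι → α) → β) : ({i // i ≠ j} → α) → β :=
  fun c => f ((funSplitAt j α).symm (a, c))

lemma face_update {β : Type*} (j : ι) (a b : α) (f : (ι → α) → β) :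
    face j b (fun c => f (update c j a)) = face j a f := by
  funext c
  simp only [face, update_funSplitAt_symm]

end FunSplitAt

section Cube

variable {ι : Type*} [Fintype ι]

def conjPow (c : ι → Bool) (z : ℂ) : ℂ :=
  if Even (Finset.univ.filter (fun i => c i = true)).card then z else conj z

def cubeDot {M : Type*} [AddCommMonoid M] (c : ι → Bool) (h : ι → M) : M :=
  ∑ i, if c i then h i else 0

@[simp]
lemma conjPow_eq_zero_iff {c : ι → Bool} {z : ℂ} : conjPow c z = 0 ↔ z = 0 := by
  unfold conjPow; split_ifs <;> simp

@[simp]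
lemma cubeDot_const_false {M : Type*} [AddCommMonoid M] (h : ι → M) :
    cubeDot (fun _ => false) h = 0 := by
  simp [cubeDot]

variable [DecidableEq ι]

@[simp]
lemma cubeDot_single {M : Type*} [AddCommMonoid M] (i : ι) (h : ι → M) :
    cubeDot (Pi.single i true) h = h i := by
  simp [cubeDot, Pi.single_apply]

lemma cubeDot_funSplitAt_symm {M : Type*} [AddCommMonoid M] (j : ι) (b : Bool)
    (c : {i // i ≠ j} → Bool) (t : M) (h : {i // i ≠ j} → M) :
    cubeDot ((funSplitAt j Bool).symm (b, c)) ((funSplitAt j M).symm (t, h)) =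
      (if b then t else 0) + cubeDot c h := by
  simp only [cubeDot, Fintype.sum_eq_add_sum_subtype_ne _ j, funSplitAt_symm_apply_self,
    funSplitAt_symm_apply_coe]

lemma conjPow_funSplitAt_symm (j : ι) (b : Bool) (c : {i // i ≠ j} → Bool) (z : ℂ) :
    conjPow ((funSplitAt j Bool).symm (b, c)) z =
      if b then conj (conjPow c z) else conjPow c z := by
  have hcard : #{i | (funSplitAt j Bool).symm (b, c) i = true} =
      (if b then 1 else 0) + #{i | c i = true} := by
    simp only [card_filter, Fintype.sum_eq_add_sum_subtype_ne _ j, funSplitAt_symm_apply_self,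
      funSplitAt_symm_apply_coe]
  rw [conjPow, hcard, conjPow]
  cases b <;> by_cases hc : Even #{i | c i = true} <;> simp [hc, Nat.even_add_one, add_comm 1]

lemma prod_update_false_mul_update_true {M : Type*} [CommMonoid M] (Q : (ι → Bool) → M) (j : ι) :
    ∏ b, Q (update b j false) * Q (update b j true) = (∏ b, Q b) ^ 2 := by
  have hflip : Involutive fun b : ι → Bool => update b j (!b j) := fun b => by simp
  calc ∏ b, Q (update b j false) * Q (update b j true) = ∏ b, Q b * Q (update b j (!b j)) :=
        prod_congr rfl fun b _ => by
          have hself := update_eq_self j b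
          cases hb : b j <;> rw [hb] at hself
          · rw [hself, Bool.not_false]
          · rw [hself, Bool.not_true, mul_comm]
    _ = (∏ b, Q b) ^ 2 := by
        rw [prod_mul_distrib, sq,
          Fintype.prod_equiv (hflip.toPerm _) (fun b => Q (update b j (!b j))) Q fun _ => rfl]

end Cube

section Gowers

variable {ι G : Type*} [Fintype ι] [DecidableEq ι] [AddCommGroup G] {f : (ι → Bool) → G → ℂ}

def gowersTerm (f : (ι → Bool) → G → ℂ) (x : G) (h : ι → G) : ℂ :=
  ∏ c, conjPow c (f c (x + cubeDot c h))

lemma gowersTerm_funSplitAt_symm (j : ι) (x t : G) (h : {i // i ≠ j} → G) :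
    gowersTerm f x ((funSplitAt j G).symm (t, h)) =
      gowersTerm (face j false f) x h * conj (gowersTerm (face j true f) (x + t) h) := by
  simp only [gowersTerm, map_prod]
  rw [← (funSplitAt j Bool).symm.prod_comp, Fintype.prod_prod_type, Fintype.prod_bool, mul_comm]
  congr 1 <;> refine prod_congr rfl fun c _ => ?_ <;>
    simp [face, conjPow_funSplitAt_symm, cubeDot_funSplitAt_symm, add_assoc]

variable [DecidableEq G]

def gowersBoxSum (T : Finset G) (f : (ι → Bool) → G → ℂ) : ℂ :=
  ∑ x ∈ T, ∑ h ∈ Fintype.piFinset fun _ : ι => T - T, gowersTerm f x h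

lemma sum_sub_self_add_of_support_subset {M : Type*} [AddCommMonoid M] {T : Finset G} {W : G → M}
    (hW : support W ⊆ T) {x : G} (hx : x ∈ T) :
    ∑ t ∈ T - T, W (x + t) = ∑ y ∈ T, W y := by
  rw [← sum_image fun _ _ _ _ => add_left_cancel]
  refine (sum_subset (fun y hy => mem_image.mpr ⟨y - x, sub_mem_sub hy hx, add_sub_cancel x y⟩)
    fun y _ hy => ?_).symm
  exact notMem_support.mp fun hW' => hy (hW hW')

variable {T : Finset G}

lemma mem_of_gowersTerm_ne_zero (hT : ∀ c, support (f c) ⊆ T) {x : G} {h : ι → G}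
    (hf : gowersTerm f x h ≠ 0) : x ∈ T ∧ h ∈ Fintype.piFinset fun _ => T - T := by
  rw [gowersTerm] at hf
  have hmem : ∀ c, x + cubeDot c h ∈ T := fun c =>
    hT c (by simpa using prod_ne_zero_iff.mp hf c (mem_univ c))
  have hx : x ∈ T := by simpa using hmem fun _ => false
  exact ⟨hx, Fintype.mem_piFinset.mpr fun i => by
    simpa using sub_mem_sub (hmem (Pi.single i true)) hx⟩

/-- Split `h = (h_j, h')` and substitute `y = x + h_j`: the shifted sum over `h_j ∈ T - T` is
the full sum over `y ∈ T`, which decouples the two faces `c_j = 0` and `c_j = 1`. -/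
theorem gowersBoxSum_eq_sum_mul_conj (hT : ∀ c, support (f c) ⊆ T) (j : ι) :
    gowersBoxSum T f = ∑ h ∈ Fintype.piFinset fun _ : {i // i ≠ j} => T - T,
      (∑ x ∈ T, gowersTerm (face j false f) x h) *
        conj (∑ x ∈ T, gowersTerm (face j true f) x h) := by
  have hsupp : ∀ h, support (fun y => conj (gowersTerm (face j true f) y h)) ⊆ T :=
    fun h y hy => (mem_of_gowersTerm_ne_zero (fun c => hT _)
      (by rwa [mem_support, map_ne_zero] at hy)).1
  calc gowersBoxSum T f
      = ∑ x ∈ T, ∑ p ∈ (T - T) ×ˢ Fintype.piFinset fun _ : {i // i ≠ j} => T - T,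
          gowersTerm f x ((funSplitAt j G).symm p) :=
        sum_congr rfl fun x _ => (sum_equiv (funSplitAt j G).symm
          (fun p => (funSplitAt_symm_mem_piFinset_iff j _ p).symm) fun _ _ => rfl).symm
    _ = ∑ h ∈ Fintype.piFinset fun _ : {i // i ≠ j} => T - T, ∑ x ∈ T,
          gowersTerm (face j false f) x h *
            ∑ t ∈ T - T, conj (gowersTerm (face j true f) (x + t) h) := by
        simp_rw [sum_product_right, gowersTerm_funSplitAt_symm, mul_sum]
        exact sum_comm
    _ = _ := by
        refine sum_congr rfl fun h _ => ?_
        rw [sum_mul]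
        refine sum_congr rfl fun x hx => ?_
        rw [sum_sub_self_add_of_support_subset (hsupp h) hx, map_sum]

theorem gowersBoxSum_update_eq_sum_norm_sq (hT : ∀ c, support (f c) ⊆ T) (j : ι) (ε : Bool) :
    gowersBoxSum T (fun c => f (update c j ε)) =
      ((∑ h ∈ Fintype.piFinset fun _ : {i // i ≠ j} => T - T,
        ‖∑ x ∈ T, gowersTerm (face j ε f) x h‖ ^ 2 : ℝ) : ℂ) := by
  rw [gowersBoxSum_eq_sum_mul_conj (fun c => hT _) j, face_update, face_update]
  push_cast
  simp_rw [Complex.mul_conj']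

theorem gowersBoxSum_update_nonneg (hT : ∀ c, support (f c) ⊆ T) (j : ι) (ε : Bool) :
    0 ≤ gowersBoxSum T (fun c => f (update c j ε)) := by
  rw [gowersBoxSum_update_eq_sum_norm_sq hT]
  exact_mod_cast (by positivity : (0 : ℝ) ≤ _)

theorem norm_gowersBoxSum_sq_le (hT : ∀ c, support (f c) ⊆ T) (j : ι) :
    ‖gowersBoxSum T f‖ ^ 2 ≤ ‖gowersBoxSum T (fun c => f (update c j false))‖ *
      ‖gowersBoxSum T (fun c => f (update c j true))‖ := by
  rw [gowersBoxSum_update_eq_sum_norm_sq hT, gowersBoxSum_update_eq_sum_norm_sq hT,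
    Complex.norm_of_nonneg (by positivity), Complex.norm_of_nonneg (by positivity),
    gowersBoxSum_eq_sum_mul_conj hT j]
  exact norm_sum_mul_conj_sq_le _ _ _

/-- Induction on the set `S` of coordinates frozen to `b`. The exponent and the range of the
product do not depend on `S`, so the case `S = ∅` is an equality and every new coordinate is one
Cauchy–Schwarz step per factor. -/
theorem norm_gowersBoxSum_pow_le_prod_piecewise (hT : ∀ c, support (f c) ⊆ T) (S : Finset ι) :
    ‖gowersBoxSum T f‖ ^ 2 ^ Fintype.card ι ≤
      ∏ b, ‖gowersBoxSum T (fun c => f (S.piecewise b c))‖ := by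
  induction S using Finset.induction_on with
  | empty => simp
  | insert j S hj ih =>
    set P := fun b => ‖gowersBoxSum T (fun c => f (S.piecewise b c))‖
    set Q := fun b => ‖gowersBoxSum T (fun c => f ((insert j S).piecewise b c))‖
    have hPQ : ∀ b, P b ^ 2 ≤ Q (update b j false) * Q (update b j true) := fun b => by
      have hpiece : ∀ ε c,
          S.piecewise b (update c j ε) = (insert j S).piecewise (update b j ε) c :=
        fun ε c => by
          ext i
          obtain rfl | hi := eq_or_ne i j
          · simp [hj]
          · by_cases hiS : i ∈ S <;> simp [hi, hiS]
      simpa only [hpiece] using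
        norm_gowersBoxSum_sq_le (f := fun c => f (S.piecewise b c)) (fun c => hT _) j
    refine ih.trans ((pow_le_pow_iff_left₀ (by positivity) (by positivity) two_ne_zero).mp ?_)
    rw [← prod_update_false_mul_update_true Q j, ← prod_pow]
    exact prod_le_prod (fun b _ => by positivity) fun b _ => hPQ b

theorem norm_gowersBoxSum_pow_le_prod (hT : ∀ c, support (f c) ⊆ T) :
    ‖gowersBoxSum T f‖ ^ 2 ^ Fintype.card ι ≤
      ∏ b, ‖gowersBoxSum T (fun _ : ι → Bool => f b)‖ := by
  simpa using norm_gowersBoxSum_pow_le_prod_piecewise hT (univ : Finset ι)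

end Gowers

theorem gowersInner_eq_gowersBoxSum {d : ℕ} {T : Finset ℤ} {f : (Fin d → Bool) → ℤ → ℂ}
    (hT : ∀ c, support (f c) ⊆ T) : gowersInner d f = gowersBoxSum T f := by
  have hzero : ∀ (x : ℤ) (h : Fin d → ℤ),
      ¬(x ∈ T ∧ h ∈ Fintype.piFinset fun _ => T - T) → gowersTerm f x h = 0 :=
    fun x h hxh => not_ne_iff.mp (mt (mem_of_gowersTerm_ne_zero hT) hxh)
  change ∑' x, ∑' h, gowersTerm f x h = _
  rw [tsum_congr fun x => tsum_eq_sum fun h hh => hzero x h fun hxh => hh hxh.2]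
  exact tsum_eq_sum fun x hx => sum_eq_zero fun h _ => hzero x h fun hxh => hx hxh.1

/-- Cauchy–Bunyakovskii–Gowers–Schwarz inequality: the Gowers inner product of a
family of finitely supported functions `f_c : ℤ → ℂ` is bounded in absolute value by
`∏_c ⟨(f_c,…,f_c)⟩^{1/2^d}`; in particular each diagonal Gowers inner product
`⟨(f_c,…,f_c)⟩ = ‖f_c‖_{U^d}^{2^d}` is a nonnegative real number. -/
theorem gowers_cauchy_schwarz (d : ℕ) (hd : 1 ≤ d)
    (f : (Fin d → Bool) → ℤ → ℂ)
    (hf : ∀ c, (Function.support (f c)).Finite) :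
    (∀ c : Fin d → Bool,
        0 ≤ (gowersInner d (fun _ => f c)).re ∧ (gowersInner d (fun _ => f c)).im = 0) ∧
    ‖gowersInner d f‖ ≤
      ∏ c : Fin d → Bool, (gowersInner d (fun _ => f c)).re ^ ((1 : ℝ) / 2 ^ d) := by
  obtain ⟨T, hT⟩ : ∃ T : Finset ℤ, ∀ c, support (f c) ⊆ T :=
    ⟨(Set.finite_iUnion hf).toFinset, fun c => by simpa using Set.subset_iUnion (support ∘ f) c⟩
  have hdiag : ∀ c, gowersInner d (fun _ => f c) = gowersBoxSum T (fun _ => f c) :=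
    fun c => gowersInner_eq_gowersBoxSum fun _ => hT c
  -- Freezing a coordinate leaves a constant family unchanged.
  have hnonneg : ∀ c, 0 ≤ gowersInner d (fun _ => f c) := fun c => by
    rw [hdiag]
    exact gowersBoxSum_update_nonneg (f := fun _ => f c) (fun _ => hT c) ⟨0, hd⟩ false
  have hnorm : ∀ c, ‖gowersInner d (fun _ => f c)‖ = (gowersInner d (fun _ => f c)).re :=
    fun c => (Complex.re_eq_norm.mpr (hnonneg c)).symm
  refine ⟨fun c => RCLike.nonneg_iff.mp (hnonneg c), ?_⟩
  have hpow := norm_gowersBoxSum_pow_le_prod hT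
  simp_rw [Fintype.card_fin, ← gowersInner_eq_gowersBoxSum hT, ← hdiag, hnorm] at hpow
  have hexp : (1 : ℝ) / 2 ^ d = ((2 ^ d : ℕ) : ℝ)⁻¹ := by push_cast; rw [one_div]
  calc ‖gowersInner d f‖ = (‖gowersInner d f‖ ^ 2 ^ d) ^ ((1 : ℝ) / 2 ^ d) := by
        rw [hexp, Real.pow_rpow_inv_natCast (norm_nonneg _) (by positivity)]
    _ ≤ (∏ c, (gowersInner d (fun _ => f c)).re) ^ ((1 : ℝ) / 2 ^ d) :=
        Real.rpow_le_rpow (by positivity) hpow (by positivity)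
    _ = _ := (Real.finsetProd_rpow _ _ (fun c _ => (RCLike.nonneg_iff.mp (hnonneg c)).1) _).symm
end

section
/- Let (X, 𝒜, μ, T) be an ergodic dynamical system and f ∈ L^∞(X, μ). Then for every z ∈ ℂ with |z| = 1 and μ-almost every x ∈ X, limsup_{N→∞} |(1/N) ∑_{n=0}^{N−1} z^{n} f(T^{n} x)| ≤ ‖f‖_{U²}. -/
/-!
Van der Corput's inequality bounds `K² |∑_{n<N} aₙ|²` by `(N + K) ∑_{h,h'<K} |ρ_N(|h - h'|)|`,
where `ρ_N(d) = ∑_n a_{n+d} conj aₙ`. For `aₙ = zⁿ f(Tⁿx)` the phase `z^d` drops out of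
`ρ_N(d)`, and Birkhoff's pointwise ergodic theorem (derived from the maximal ergodic theorem)
gives `|ρ_N(d)| / N → c_d = |∫ conj f · f ∘ T^d|` for a.e. `x`. So for every `K` the limsup is
at most the square root of the Fejér mean `K⁻² ∑_{h,h'<K} c_{|h-h'|}`. By Cauchy–Schwarz this is
at most the square root of the Fejér mean of `c²`, and Fejér means of `c²` converge to its
Cesàro limit `‖f‖_{U²}⁴`.
-/

open MeasureTheory Filter Finset Function Topology Asymptotics
open scoped ComplexConjugate

section MaximalErgodic

variable {X : Type*} {T : X → X} {g : X → ℝ}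

/-- `birkhoffMax T g n x = max_{k ≤ n} birkhoffSum T g k x` (the `k = 0` term is `0`). -/
noncomputable def birkhoffMax (T : X → X) (g : X → ℝ) : ℕ → X → ℝ
  | 0 => 0
  | n + 1 => fun x => max (g x + birkhoffMax T g n (T x)) 0

lemma birkhoffMax_nonneg : ∀ n x, 0 ≤ birkhoffMax T g n x
  | 0, _ => le_rfl
  | _ + 1, _ => le_max_right _ _

lemma birkhoffMax_le_succ : ∀ n x, birkhoffMax T g n x ≤ birkhoffMax T g (n + 1) x
  | 0, _ => le_max_right _ _
  | n + 1, x => max_le_max_right 0 (add_le_add le_rfl (birkhoffMax_le_succ n (T x)))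

lemma birkhoffSum_le_birkhoffMax : ∀ n x, birkhoffSum T g n x ≤ birkhoffMax T g n x
  | 0, _ => le_rfl
  | n + 1, x => by
    rw [birkhoffSum_succ']
    exact le_max_of_le_left (add_le_add le_rfl (birkhoffSum_le_birkhoffMax n (T x)))

lemma birkhoffMax_le_add_comp {n : ℕ} {x : X} (hx : 0 < birkhoffMax T g n x) :
    birkhoffMax T g n x ≤ g x + birkhoffMax T g n (T x) := by
  cases n with
  | zero => exact absurd hx (lt_irrefl 0)
  | succ n =>
    have hmax : birkhoffMax T g (n + 1) x = g x + birkhoffMax T g n (T x) :=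
      max_eq_left (not_lt.mp fun h => hx.ne' (max_eq_right h.le))
    rw [hmax]
    exact add_le_add le_rfl (birkhoffMax_le_succ n (T x))

variable [MeasurableSpace X] {μ : Measure X}

lemma measurable_birkhoffMax (hT : Measurable T) (hg : Measurable g) :
    ∀ n, Measurable (birkhoffMax T g n)
  | 0 => measurable_const
  | n + 1 => (hg.add ((measurable_birkhoffMax hT hg n).comp hT)).max measurable_const

lemma integrable_birkhoffMax (hT : MeasurePreserving T μ μ) (hg : Integrable g μ) :
    ∀ n, Integrable (birkhoffMax T g n) μ
  | 0 => integrable_zero _ _ _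
  | n + 1 => (hg.add (hT.integrable_comp_of_integrable (integrable_birkhoffMax hT hg n))).pos_part

/-- The maximal ergodic theorem, in Garsia's form. -/
theorem setIntegral_birkhoffMax_pos_nonneg (hT : MeasurePreserving T μ μ) (hg : Measurable g)
    (hgi : Integrable g μ) (n : ℕ) :
    0 ≤ ∫ x in {x | 0 < birkhoffMax T g n x}, g x ∂μ := by
  set F := birkhoffMax T g n
  set E := {x | 0 < F x}
  have hE : MeasurableSet E :=
    measurableSet_lt measurable_const (measurable_birkhoffMax hT.measurable hg n)
  have hF : Integrable F μ := integrable_birkhoffMax hT hgi n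
  have hFT : Integrable (F ∘ T) μ := hT.integrable_comp_of_integrable hF
  have hdiff : Integrable (F - F ∘ T) μ := hF.sub hFT
  have hFT_eq : ∫ x, F (T x) ∂μ = ∫ x, F x ∂μ := by
    have := integral_map hT.measurable.aemeasurable (hT.map_eq.symm ▸ hF.aestronglyMeasurable)
    rwa [hT.map_eq, eq_comm] at this
  calc (0 : ℝ) = ∫ x, (F - F ∘ T) x ∂μ := by
        rw [integral_sub' hF hFT]
        simp only [comp_apply, hFT_eq, sub_self]
    _ ≤ ∫ x in E, (F - F ∘ T) x ∂μ := by
        rw [← integral_add_compl hE hdiff]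
        refine add_le_of_nonpos_right (setIntegral_nonpos hE.compl fun x hx => ?_)
        have hFx : F x = 0 := le_antisymm (not_lt.mp hx) (birkhoffMax_nonneg n x)
        simpa [hFx] using birkhoffMax_nonneg n (T x)
    _ ≤ ∫ x in E, g x ∂μ := setIntegral_mono_on hdiff.integrableOn hgi.integrableOn hE
        fun x hx => by simpa using birkhoffMax_le_add_comp hx

end MaximalErgodic

section Birkhoff

variable {X : Type*} [MeasurableSpace X] {μ : Measure X} {T : X → X}

theorem Ergodic.ae_isBoundedUnder_birkhoffSum [IsFiniteMeasure μ] (hT : Ergodic T μ)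
    {g : X → ℝ} (hg : Measurable g) (hgi : Integrable g μ) (hneg : ∫ x, g x ∂μ < 0) :
    ∀ᵐ x ∂μ, IsBoundedUnder (· ≤ ·) atTop fun n => birkhoffSum T g n x := by
  set E : ℕ → Set X := fun n => {x | 0 < birkhoffMax T g n x}
  have hE : ∀ n, MeasurableSet (E n) := fun n =>
    measurableSet_lt measurable_const (measurable_birkhoffMax hT.measurable hg n)
  set A : Set X := ⋂ m, T^[m] ⁻¹' ⋃ n, E n
  have hA : MeasurableSet A :=
    .iInter fun m => (MeasurableSet.iUnion hE).preimage (hT.measurable.iterate m)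
  have hAT : A ⊆ T ⁻¹' A := fun x hx => Set.mem_iInter.2 fun m => by
    simpa only [Set.mem_preimage, iterate_succ_apply] using Set.mem_iInter.1 hx (m + 1)
  rcases hT.ae_empty_or_univ_of_ae_le_preimage hA.nullMeasurableSet hAT.eventuallyLE
    with hA0 | hA1
  · -- once the orbit of `x` leaves `⋃ n, E n`, its Birkhoff sums stop growing
    filter_upwards [measure_eq_zero_iff_ae_notMem.mp (ae_eq_empty.mp hA0)] with x hx
    obtain ⟨m, hm⟩ := not_forall.mp (Set.mem_iInter.not.mp hx)
    have hm' : ∀ n, birkhoffSum T g n (T^[m] x) ≤ 0 := fun n =>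
      (birkhoffSum_le_birkhoffMax n _).trans
        (not_lt.mp fun h => hm (Set.mem_iUnion.2 ⟨n, h⟩))
    refine isBoundedUnder_of_eventually_le (a := birkhoffSum T g m x) ?_
    filter_upwards [eventually_ge_atTop m] with n hn
    obtain ⟨k, rfl⟩ := Nat.exists_eq_add_of_le hn
    rw [birkhoffSum_add]
    linarith [hm' k]
  · -- otherwise the maximal ergodic theorem forces `∫ g ≥ 0`
    exfalso
    have hEuniv : (⋃ n, E n) =ᵐ[μ] Set.univ :=
      ae_eq_univ.mpr <| measure_mono_null
        (Set.compl_subset_compl.mpr (Set.iInter_subset (fun m => T^[m] ⁻¹' ⋃ n, E n) 0))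
        (ae_eq_univ.mp hA1)
    have hmono : Monotone E := monotone_nat_of_le_succ fun n x hx =>
      hx.trans_le (birkhoffMax_le_succ n x)
    have hlim := tendsto_setIntegral_of_monotone hE hmono hgi.integrableOn
    rw [setIntegral_congr_set hEuniv, setIntegral_univ] at hlim
    exact hneg.not_ge <| ge_of_tendsto hlim <| .of_forall fun n =>
      setIntegral_birkhoffMax_pos_nonneg hT.toMeasurePreserving hg hgi n

variable [IsProbabilityMeasure μ]

theorem Ergodic.ae_eventually_birkhoffAverage_lt (hT : Ergodic T μ) {g : X → ℝ}
    (hg : Measurable g) (hgi : Integrable g μ) {c : ℝ} (hc : ∫ x, g x ∂μ < c) :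
    ∀ᵐ x ∂μ, ∀ᶠ n in atTop, birkhoffAverage ℝ T g n x < c := by
  set c' := (∫ x, g x ∂μ + c) / 2
  have hc' : c' < c := by simp only [c']; linarith
  set g₀ : X → ℝ := fun x => g x - c'
  have hneg : ∫ x, g₀ x ∂μ < 0 := by
    rw [integral_sub hgi (integrable_const c'), integral_const]
    simp only [probReal_univ, smul_eq_mul, one_mul, c']
    linarith
  filter_upwards [hT.ae_isBoundedUnder_birkhoffSum (hg.sub measurable_const)
    (hgi.sub (integrable_const c')) hneg] with x ⟨B, hB⟩
  have hsmall : ∀ᶠ n : ℕ in atTop, (n : ℝ)⁻¹ * B < c - c' := by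
    have := tendsto_inv_atTop_nhds_zero_nat.mul_const B
    rw [zero_mul] at this
    exact this.eventually (eventually_lt_nhds (sub_pos.mpr hc'))
  filter_upwards [hsmall, eventually_map.mp hB, eventually_gt_atTop 0] with n hsmall hB hn
  have hsum : birkhoffSum T g n x = birkhoffSum T g₀ n x + n * c' := by
    simp [g₀, birkhoffSum, sum_sub_distrib]
  have : (n : ℝ)⁻¹ * birkhoffSum T g₀ n x ≤ (n : ℝ)⁻¹ * B :=
    mul_le_mul_of_nonneg_left hB (by positivity)
  rw [birkhoffAverage, smul_eq_mul, hsum, mul_add, inv_mul_cancel_left₀ (by positivity)]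
  linarith

theorem Ergodic.ae_tendsto_birkhoffAverage (hT : Ergodic T μ) {g : X → ℝ}
    (hg : Measurable g) (hgi : Integrable g μ) :
    ∀ᵐ x ∂μ, Tendsto (birkhoffAverage ℝ T g · x) atTop (𝓝 (∫ x, g x ∂μ)) := by
  have hlt : ∀ φ : X → ℝ, Measurable φ → Integrable φ μ →
      ∀ᵐ x ∂μ, ∀ q : ℚ, ∫ x, φ x ∂μ < q → ∀ᶠ n in atTop, birkhoffAverage ℝ T φ n x < q :=
    fun φ hφ hφi => ae_all_iff.2 fun q => by
      by_cases hq : ∫ x, φ x ∂μ < q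
      · filter_upwards [hT.ae_eventually_birkhoffAverage_lt hφ hφi hq] with x hx using fun _ => hx
      · exact .of_forall fun x h => absurd h hq
  filter_upwards [hlt g hg hgi, hlt (-g) hg.neg hgi.neg] with x hup hdown
  refine tendsto_order.2 ⟨fun b hb => ?_, fun b hb => ?_⟩
  · obtain ⟨q, hbq, hq⟩ := exists_rat_btwn hb
    filter_upwards [hdown (-q) (by simp only [Pi.neg_apply, integral_neg]; push_cast; linarith)]
      with n hn
    rw [birkhoffAverage_neg, Pi.neg_apply, Pi.neg_apply] at hn
    push_cast at hn
    linarith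
  · obtain ⟨q, hq, hqb⟩ := exists_rat_btwn hb
    filter_upwards [hup q hq] with n hn using hn.trans hqb

theorem Ergodic.ae_tendsto_birkhoffAverage_complex (hT : Ergodic T μ) {w : X → ℂ}
    (hw : Measurable w) (hwi : Integrable w μ) :
    ∀ᵐ x ∂μ, Tendsto (birkhoffAverage ℂ T w · x) atTop (𝓝 (∫ x, w x ∂μ)) := by
  filter_upwards [hT.ae_tendsto_birkhoffAverage (Complex.measurable_re.comp hw) hwi.re,
    hT.ae_tendsto_birkhoffAverage (Complex.measurable_im.comp hw) hwi.im] with x hre him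
  have := (Complex.equivRealProdCLM.symm.continuous.tendsto _).comp (hre.prodMk_nhds him)
  convert this using 2
  · apply Complex.ext
    · exact map_birkhoffAverage ℂ ℝ Complex.reAddGroupHom T w _ x
    · exact map_birkhoffAverage ℂ ℝ Complex.imAddGroupHom T w _ x
  · apply Complex.ext
    · exact (integral_re hwi).symm
    · exact (integral_im hwi).symm

end Birkhoff

section VanDerCorput

variable {𝕜 : Type*} [RCLike 𝕜]

lemma sum_norm_sq_sum_le {ι κ : Type*} (s : Finset ι) (t : Finset κ) (v : ι → κ → 𝕜) :
    ∑ k ∈ t, ‖∑ h ∈ s, v h k‖ ^ 2 ≤ ∑ h ∈ s, ∑ h' ∈ s, ‖∑ k ∈ t, v h k * conj (v h' k)‖ := by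
  have hexp : ((∑ k ∈ t, ‖∑ h ∈ s, v h k‖ ^ 2 : ℝ) : 𝕜)
      = ∑ h ∈ s, ∑ h' ∈ s, ∑ k ∈ t, v h k * conj (v h' k) := by
    push_cast
    simp_rw [← RCLike.mul_conj, map_sum, sum_mul_sum]
    rw [sum_comm]
    exact sum_congr rfl fun h _ => sum_comm
  calc ∑ k ∈ t, ‖∑ h ∈ s, v h k‖ ^ 2
      = ‖((∑ k ∈ t, ‖∑ h ∈ s, v h k‖ ^ 2 : ℝ) : 𝕜)‖ := by
        rw [RCLike.norm_ofReal, abs_of_nonneg (by positivity)]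
    _ ≤ _ := by
        rw [hexp]
        exact (norm_sum_le _ _).trans (sum_le_sum fun h _ => norm_sum_le _ _)

noncomputable def corrSum (a : ℕ → 𝕜) (N d : ℕ) : 𝕜 :=
  ∑ n ∈ range (N - d), a (n + d) * conj (a n)

noncomputable def truncShift (a : ℕ → 𝕜) (N K j : ℕ) : 𝕜 :=
  if K ≤ j ∧ j < N + K then a (j - K) else 0

lemma sum_range_add_eq_of_support {M : Type*} [AddCommMonoid M] {F : ℕ → M} {N K t : ℕ}
    (hF : ∀ j, j < K ∨ N + K ≤ j → F j = 0) (ht : t ≤ K) :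
    ∑ k ∈ range (N + K), F (k + t) = ∑ n ∈ range N, F (n + K) := by
  rw [range_eq_Ico, range_eq_Ico, sum_Ico_add', sum_Ico_add', zero_add, zero_add]
  refine (sum_subset (Ico_subset_Ico ht (by omega)) fun j hj hj' => hF j ?_).symm
  simp only [mem_Ico] at hj hj'
  omega

variable {a : ℕ → 𝕜} {N K : ℕ}

lemma truncShift_eq_zero {j : ℕ} (hj : j < K ∨ N + K ≤ j) : truncShift a N K j = 0 :=
  if_neg (by omega)

lemma truncShift_add (n : ℕ) : truncShift a N K (n + K) = if n < N then a n else 0 := by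
  by_cases hn : n < N
  · rw [truncShift, if_pos (by omega), if_pos hn, Nat.add_sub_cancel]
  · rw [truncShift, if_neg (by omega), if_neg hn]

lemma sum_range_truncShift {h : ℕ} (hh : h ≤ K) :
    ∑ k ∈ range (N + K), truncShift a N K (k + h) = ∑ n ∈ range N, a n := by
  rw [sum_range_add_eq_of_support (fun j hj => truncShift_eq_zero hj) hh]
  exact sum_congr rfl fun n hn => by rw [truncShift_add, if_pos (mem_range.mp hn)]

lemma sum_range_truncShift_mul_conj {h h' : ℕ} (hh' : h' ≤ h) (hh : h ≤ K) :
    ∑ k ∈ range (N + K), truncShift a N K (k + h) * conj (truncShift a N K (k + h'))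
      = corrSum a N (h - h') := by
  set d := h - h'
  have hshift : ∀ k, k + h = k + h' + d := fun k => by omega
  simp_rw [hshift]
  rw [sum_range_add_eq_of_support
    (F := fun j => truncShift a N K (j + d) * conj (truncShift a N K j))
    (fun j hj => by simp [truncShift_eq_zero hj]) (hh'.trans hh)]
  simp_rw [add_right_comm _ K d, truncShift_add]
  rw [corrSum, ← sum_subset (range_subset_range.mpr (Nat.sub_le N d)) fun n hn hn' => by
    simp only [mem_range] at hn hn'
    rw [if_neg (by omega), zero_mul]]
  exact sum_congr rfl fun n hn => by
    simp only [mem_range] at hn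
    rw [if_pos (by omega), if_pos (by omega)]

lemma norm_sum_range_truncShift_mul_conj {h h' : ℕ} (hh : h ≤ K) (hh' : h' ≤ K) :
    ‖∑ k ∈ range (N + K), truncShift a N K (k + h) * conj (truncShift a N K (k + h'))‖
      = ‖corrSum a N (Nat.dist h h')‖ := by
  rcases le_total h' h with hle | hle
  · rw [sum_range_truncShift_mul_conj hle hh, Nat.dist_eq_sub_of_le_right hle]
  · rw [← RCLike.norm_conj, map_sum]
    simp_rw [map_mul, RCLike.conj_conj, mul_comm (conj _)]
    rw [sum_range_truncShift_mul_conj hle hh', Nat.dist_eq_sub_of_le hle]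

/-- Van der Corput's inequality. -/
theorem sq_mul_norm_sum_sq_le (a : ℕ → 𝕜) (N K : ℕ) :
    (K : ℝ) ^ 2 * ‖∑ n ∈ range N, a n‖ ^ 2
      ≤ (N + K) * ∑ h ∈ range K, ∑ h' ∈ range K, ‖corrSum a N (Nat.dist h h')‖ := by
  -- average `K` shifted copies of the zero-extended sequence, then apply Cauchy–Schwarz
  set A : ℕ → 𝕜 := fun k => ∑ h ∈ range K, truncShift a N K (k + h)
  have hA : ∑ k ∈ range (N + K), A k = K * ∑ n ∈ range N, a n := by
    rw [sum_comm, sum_congr rfl fun h hh => sum_range_truncShift (mem_range.mp hh).le,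
      sum_const, card_range, nsmul_eq_mul]
  calc (K : ℝ) ^ 2 * ‖∑ n ∈ range N, a n‖ ^ 2 = ‖∑ k ∈ range (N + K), A k‖ ^ 2 := by
        rw [hA, norm_mul, RCLike.norm_natCast, mul_pow]
    _ ≤ (∑ k ∈ range (N + K), ‖A k‖) ^ 2 := by gcongr; exact norm_sum_le _ _
    _ ≤ (N + K) * ∑ k ∈ range (N + K), ‖A k‖ ^ 2 := by
        simpa using sq_sum_le_card_mul_sum_sq (s := range (N + K)) (f := fun k => ‖A k‖)
    _ ≤ (N + K) * ∑ h ∈ range K, ∑ h' ∈ range K, ‖corrSum a N (Nat.dist h h')‖ := by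
        gcongr
        refine (sum_norm_sq_sum_le _ _ _).trans_eq (sum_congr rfl fun h hh => sum_congr rfl
          fun h' hh' => norm_sum_range_truncShift_mul_conj ?_ ?_)
        · exact (mem_range.mp hh).le
        · exact (mem_range.mp hh').le

end VanDerCorput

section Fejer

lemma sum_range_sub_eq_sum_Icc {M : Type*} [AddCommMonoid M] (s : ℕ → M) (K : ℕ) :
    ∑ h ∈ range K, s (K - h) = ∑ d ∈ Icc 1 K, s d :=
  sum_nbij' (fun h => K - h) (fun d => K - d) (by simp; omega) (by simp; omega)
    (by simp; omega) (by simp; omega) fun _ _ => rfl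

lemma sum_range_sum_range_dist {M : Type*} [AddCommMonoid M] (s : ℕ → M) (K : ℕ) :
    ∑ h ∈ range K, ∑ h' ∈ range K, s (Nat.dist h h')
      = K • s 0 + 2 • ∑ j ∈ range K, ∑ d ∈ Icc 1 j, s d := by
  induction K with
  | zero => simp
  | succ K ih =>
    have hrow : ∀ h ∈ range K, s (Nat.dist h K) = s (K - h) := fun h hh => by
      rw [Nat.dist_eq_sub_of_le (mem_range.mp hh).le]
    have hcol : ∀ h ∈ range K, s (Nat.dist K h) = s (K - h) := fun h hh => by
      rw [Nat.dist_comm, hrow h hh]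
    simp only [sum_range_succ, sum_add_distrib, ih, sum_congr rfl hrow, sum_congr rfl hcol,
      sum_range_sub_eq_sum_Icc, Nat.dist_self]
    rw [add_nsmul, one_nsmul, nsmul_add]
    abel

lemma sum_range_natCast_id (K : ℕ) : ∑ j ∈ range K, (j : ℝ) = K * (K - 1) / 2 := by
  induction K with
  | zero => simp
  | succ K ih => rw [sum_range_succ, ih]; push_cast; ring

lemma tendsto_sum_range_div_sq {Q : ℕ → ℝ} {l : ℝ} (h : Tendsto (fun j => Q j / j) atTop (𝓝 l)) :
    Tendsto (fun K : ℕ => (∑ j ∈ range K, Q j) / K ^ 2) atTop (𝓝 (l / 2)) := by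
  have hid : Tendsto (fun K : ℕ => (∑ j ∈ range K, (j : ℝ)) / K ^ 2) atTop (𝓝 (1 / 2)) := by
    have : Tendsto (fun K : ℕ => (1 - (K : ℝ)⁻¹) / 2) atTop (𝓝 (1 / 2)) := by
      simpa using (tendsto_inv_atTop_nhds_zero_nat (𝕜 := ℝ)).const_sub 1 |>.div_const 2
    refine this.congr' ((eventually_ne_atTop 0).mono fun K hK => ?_)
    simp only [sum_range_natCast_id]
    field_simp
  have hid_top : Tendsto (fun K : ℕ => ∑ j ∈ range K, (j : ℝ)) atTop atTop := by
    have hsq : Tendsto (fun K : ℕ => (K : ℝ) ^ 2) atTop atTop :=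
      (tendsto_pow_atTop two_ne_zero).comp tendsto_natCast_atTop_atTop
    refine (hid.pos_mul_atTop one_half_pos hsq).congr' ((eventually_ne_atTop 0).mono fun K hK => ?_)
    field_simp
  have ho : (fun j : ℕ => Q j - l * j) =o[atTop] fun j => (j : ℝ) := by
    rw [isLittleO_iff_tendsto' ((eventually_ne_atTop 0).mono fun j hj h0 => absurd h0 (by simpa))]
    have := h.sub_const l
    rw [sub_self] at this
    refine this.congr' ((eventually_ne_atTop 0).mono fun j hj => ?_)
    field_simp
  have herr := (ho.sum_range (fun j => Nat.cast_nonneg j) hid_top).tendsto_div_nhds_zero.mul hid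
  have := herr.add (hid.const_mul l)
  rw [zero_mul, zero_add, mul_one_div] at this
  refine this.congr' ((eventually_gt_atTop 1).mono fun K hK => ?_)
  have hK' : (1 : ℝ) < K := by exact_mod_cast hK
  have : ∑ j ∈ range K, (j : ℝ) ≠ 0 := by
    rw [sum_range_natCast_id]
    exact (div_pos (mul_pos (by linarith) (by linarith)) two_pos).ne'
  rw [sum_sub_distrib, ← mul_sum]
  field_simp
  ring

noncomputable def fejerMean (s : ℕ → ℝ) (K : ℕ) : ℝ :=
  (∑ h ∈ range K, ∑ h' ∈ range K, s (Nat.dist h h')) / K ^ 2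

theorem tendsto_fejerMean {s : ℕ → ℝ} {l : ℝ}
    (hs : Tendsto (fun H : ℕ => (∑ d ∈ Icc 1 H, s d) / H) atTop (𝓝 l)) :
    Tendsto (fejerMean s) atTop (𝓝 l) := by
  have h0 : Tendsto (fun K : ℕ => s 0 / K) atTop (𝓝 0) := tendsto_const_div_atTop_nhds_zero_nat _
  have := h0.add ((tendsto_sum_range_div_sq hs).const_mul 2)
  rw [zero_add, mul_div_cancel₀ _ two_ne_zero] at this
  refine this.congr fun K => ?_
  rw [fejerMean, sum_range_sum_range_dist, nsmul_eq_mul, nsmul_eq_mul]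
  rcases eq_or_ne K 0 with rfl | hK
  · simp
  · field_simp
    push_cast
    ring

lemma fejerMean_sq_le (c : ℕ → ℝ) (K : ℕ) :
    fejerMean c K ^ 2 ≤ fejerMean (fun d => c d ^ 2) K := by
  have hcs := sq_sum_le_card_mul_sum_sq (s := range K ×ˢ range K)
    (f := fun p => c (Nat.dist p.1 p.2))
  rw [sum_product, sum_product, card_product, card_range] at hcs
  rcases eq_or_ne K 0 with rfl | hK
  · simp [fejerMean]
  · rw [fejerMean, fejerMean, div_pow, div_le_div_iff₀ (by positivity) (by positivity)]
    push_cast at hcs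
    nlinarith [hcs]

end Fejer

section Limsup

variable {𝕜 : Type*} [RCLike 𝕜] {a : ℕ → 𝕜} {c : ℕ → ℝ}

theorem limsup_norm_sum_div_le_sqrt_fejerMean
    (hc : ∀ d, Tendsto (fun N : ℕ => ‖corrSum a N d‖ / N) atTop (𝓝 (c d))) {K : ℕ} (hK : 0 < K) :
    limsup (fun N : ℕ => ‖∑ n ∈ range N, a n‖ / N) atTop ≤ √(fejerMean c K) := by
  set R : ℕ → ℝ := fun N => (N + K) / N *
    ((∑ h ∈ range K, ∑ h' ∈ range K, ‖corrSum a N (Nat.dist h h')‖ / N) / K ^ 2)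
  have hR : Tendsto R atTop (𝓝 (fejerMean c K)) := by
    have hratio : Tendsto (fun N : ℕ => ((N : ℝ) + K) / N) atTop (𝓝 1) := by
      have := (tendsto_const_div_atTop_nhds_zero_nat (K : ℝ)).const_add 1
      rw [add_zero] at this
      refine this.congr' ((eventually_ne_atTop 0).mono fun N hN => ?_)
      field_simp
    have := hratio.mul ((tendsto_finsetSum (range K) fun h _ =>
      tendsto_finsetSum (range K) fun h' _ => hc (Nat.dist h h')).div_const ((K : ℝ) ^ 2))
    rwa [one_mul] at this
  have hle : ∀ᶠ N : ℕ in atTop, ‖∑ n ∈ range N, a n‖ / N ≤ √(R N) := by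
    filter_upwards [eventually_gt_atTop 0] with N hN
    apply Real.le_sqrt_of_sq_le
    have hRN : R N = (N + K) * (∑ h ∈ range K, ∑ h' ∈ range K, ‖corrSum a N (Nat.dist h h')‖)
        / (K ^ 2 * N ^ 2) := by
      simp only [R, ← sum_div]
      field_simp
    rw [hRN, div_pow, div_le_div_iff₀ (by positivity) (by positivity)]
    linear_combination (N : ℝ) ^ 2 * sq_mul_norm_sum_sq_le a N K
  calc limsup (fun N : ℕ => ‖∑ n ∈ range N, a n‖ / N) atTop
      ≤ limsup (fun N => √(R N)) atTop :=
        limsup_le_limsup hle (isCoboundedUnder_le_of_le atTop fun N => by positivity)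
          hR.sqrt.isBoundedUnder_le
    _ = √(fejerMean c K) := hR.sqrt.limsup_eq

theorem limsup_norm_sum_div_le_of_tendsto_corrSum {u : ℝ} (hu : 0 ≤ u)
    (hc : ∀ d, Tendsto (fun N : ℕ => ‖corrSum a N d‖ / N) atTop (𝓝 (c d)))
    (hU : Tendsto (fun H : ℕ => (∑ h ∈ Icc 1 H, c h ^ 2) / H) atTop (𝓝 (u ^ 4))) :
    limsup (fun N : ℕ => ‖∑ n ∈ range N, a n‖ / N) atTop ≤ u := by
  have hlim : Tendsto (fun K => √√(fejerMean (fun d => c d ^ 2) K)) atTop (𝓝 u) := by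
    have := (tendsto_fejerMean hU).sqrt.sqrt
    rwa [show u ^ 4 = (u ^ 2) ^ 2 by ring, Real.sqrt_sq (by positivity), Real.sqrt_sq hu] at this
  refine ge_of_tendsto hlim ((eventually_gt_atTop 0).mono fun K hK => ?_)
  calc limsup (fun N : ℕ => ‖∑ n ∈ range N, a n‖ / N) atTop ≤ √(fejerMean c K) :=
        limsup_norm_sum_div_le_sqrt_fejerMean hc hK
    _ ≤ √√(fejerMean (fun d => c d ^ 2) K) :=
        Real.sqrt_le_sqrt ((le_abs_self _).trans (Real.abs_le_sqrt (fejerMean_sq_le c K)))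

end Limsup

section Correlation

lemma tendsto_apply_sub_div {φ : ℕ → ℝ} {l : ℝ} (h : Tendsto (fun m => φ m / m) atTop (𝓝 l))
    (d : ℕ) : Tendsto (fun N => φ (N - d) / N) atTop (𝓝 l) := by
  have hratio : Tendsto (fun N : ℕ => ((N - d : ℕ) : ℝ) / N) atTop (𝓝 1) := by
    refine ((tendsto_natCast_div_add_atTop (d : ℝ)).comp (tendsto_sub_atTop_nat d)).congr'
      ((eventually_ge_atTop d).mono fun N hN => ?_)
    simp [Nat.cast_sub hN]
  have := (h.comp (tendsto_sub_atTop_nat d)).mul hratio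
  rw [mul_one] at this
  refine this.congr' ((eventually_gt_atTop d).mono fun N hN => ?_)
  have : ((N - d : ℕ) : ℝ) ≠ 0 := by simp; omega
  simp only [comp_apply]
  field_simp

lemma corrSum_pow_mul_iterate {X : Type*} {z : ℂ} (hz : ‖z‖ = 1) (f : X → ℂ) (T : X → X)
    (x : X) (N d : ℕ) :
    corrSum (fun n => z ^ n * f (T^[n] x)) N d
      = z ^ d * birkhoffSum T (fun y => conj (f y) * f (T^[d] y)) (N - d) x := by
  have hz' : z * conj z = 1 := by simp [RCLike.mul_conj, hz]
  rw [corrSum, birkhoffSum, mul_sum]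
  refine sum_congr rfl fun n _ => ?_
  rw [map_mul, map_pow, add_comm n d, iterate_add_apply, pow_add]
  calc z ^ d * z ^ n * f (T^[d] (T^[n] x)) * (conj z ^ n * conj (f (T^[n] x)))
      = z ^ d * (z * conj z) ^ n * (conj (f (T^[n] x)) * f (T^[d] (T^[n] x))) := by ring
    _ = _ := by rw [hz', one_pow, mul_one]

variable {X : Type*} [MeasurableSpace X] {μ : Measure X} {T : X → X} {f : X → ℂ}

theorem Ergodic.ae_tendsto_norm_corrSum_div [IsProbabilityMeasure μ] (hT : Ergodic T μ)
    (hf : Measurable f) (hfb : MemLp f ⊤ μ) {z : ℂ} (hz : ‖z‖ = 1) :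
    ∀ᵐ x ∂μ, ∀ d, Tendsto (fun N : ℕ => ‖corrSum (fun n => z ^ n * f (T^[n] x)) N d‖ / N)
      atTop (𝓝 ‖∫ y, conj (f y) * f (T^[d] y) ∂μ‖) := by
  refine ae_all_iff.2 fun d => ?_
  set w : X → ℂ := fun y => conj (f y) * f (T^[d] y)
  have hw : Measurable w :=
    (continuous_star.measurable.comp hf).mul (hf.comp (hT.measurable.iterate d))
  have hwi : Integrable w μ :=
    ((hfb.comp_measurePreserving (hT.toMeasurePreserving.iterate d)).mul hfb.star).integrable le_top
  filter_upwards [hT.ae_tendsto_birkhoffAverage_complex hw hwi] with x hx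
  refine (tendsto_apply_sub_div (φ := fun m => ‖birkhoffSum T w m x‖) ?_ d).congr fun N => ?_
  · refine hx.norm.congr fun m => ?_
    rw [birkhoffAverage, norm_smul, norm_inv, Complex.norm_natCast, inv_mul_eq_div]
  · rw [corrSum_pow_mul_iterate hz, norm_mul, norm_pow, hz, one_pow, one_mul]

end Correlation

/-- For an ergodic dynamical system `(X, μ, T)`, `f ∈ L^∞(X, μ)`, and `z` on the unit
circle, `limsup_N |(1/N) ∑_{n=0}^{N-1} zⁿ f(Tⁿ x)| ≤ ‖f‖_{U²}` for a.e. `x`; here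
`u = ‖f‖_{U²}` is the nonnegative number with
`u⁴ = lim_H (1/H) ∑_{h=1}^H |∫ conj f · f∘T^h dμ|²`. -/
theorem limsup_weighted_avg_le_gowers_U2
    {X : Type*} [MeasurableSpace X] (μ : Measure X) [IsProbabilityMeasure μ]
    (T : X ≃ᵐ X) (hT : Ergodic (⇑T) μ)
    (f : X → ℂ) (hfm : Measurable f) (hfb : MemLp f ⊤ μ)
    (u : ℝ) (hu : 0 ≤ u)
    (hU : Tendsto (fun H : ℕ => (1 / (H : ℝ)) * ∑ h ∈ Finset.Icc 1 H,
        ‖∫ x, conj (f x) * f ((⇑T)^[h] x) ∂μ‖ ^ 2) atTop (nhds (u ^ 4)))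
    (z : ℂ) (hz : ‖z‖ = 1) :
    ∀ᵐ x ∂μ,
      Filter.limsup (fun N : ℕ =>
          ‖(1 / (N : ℂ)) * ∑ n ∈ Finset.range N, z ^ n * f ((⇑T)^[n] x)‖) atTop ≤ u := by
  filter_upwards [hT.ae_tendsto_norm_corrSum_div hfm hfb hz] with x hx
  have hU' : Tendsto (fun H : ℕ => (∑ h ∈ Icc 1 H, ‖∫ y, conj (f y) * f ((⇑T)^[h] y) ∂μ‖ ^ 2) / H)
      atTop (𝓝 (u ^ 4)) := by
    simpa only [one_div_mul_eq_div] using hU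
  convert limsup_norm_sum_div_le_of_tendsto_corrSum hu hx hU' using 3 with N
  rw [norm_mul, one_div, norm_inv, Complex.norm_natCast, inv_mul_eq_div]
end

section
/- (Calderón transference, strong type.) Let (a_n)_{n≥1} be a sequence of complex numbers, let P and Q be non-constant polynomials with integer coefficients mapping the natural numbers into the natural numbers, let 1 ≤ p, q, r ≤ ∞ with 1/r = 1/p + 1/q, and let C > 0. Assume that for all finitely supported functions φ, ψ : ℤ → ℂ, ‖ j ↦ sup_{N ≥ 1} |(1/N) ∑_{n=1}^{N} a_n φ(j + P(n)) ψ(j + Q(n))| ‖_{ℓ^r(ℤ)} ≤ C ‖φ‖_{ℓ^p(ℤ)} ‖ψ‖_{ℓ^q(ℤ)}. Then for any dynamical system (X, 𝒜, μ, T), any f ∈ L^p(X, μ) and g ∈ L^q(X, μ), ‖ x ↦ sup_{N ≥ 1} |(1/N) ∑_{n=1}^{N} a_n f(T^{P(n)} x) g(T^{Q(n)} x)| ‖_{L^r(μ)} ≤ C ‖f‖_{L^p(μ)} ‖g‖_{L^q(μ)}. -/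
/-!
Fix a truncation level `M` and a bound `A` for `P n`, `Q n` with `n ≤ M`. Along the orbit
segment `x, T x, …, T^(L-1) x` with `L = J + 1 + A`, the values of `f` and `g` form finitely
supported functions on `ℤ`, and for `i ≤ J` the truncated maximal average at `T^i x` is
dominated by the maximal function on `ℤ` of these windows at `i`. Since `T` preserves `μ`,
summing `r`-th powers over `i ≤ J` and integrating gives `(J + 1)^(1/r) ‖E_M‖_r` on the left,
while the hypothesis on `ℤ` and Hölder's inequality in `x` bound the right side by
`L^(1/r) C ‖f‖_p ‖g‖_q`. Letting `J → ∞` bounds `E_M`, and monotone convergence in `M` ends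
the proof.
-/

open MeasureTheory Filter Finset
open scoped ENNReal NNReal

/-- The `ℓ^r(ℤ)` norm (valued in `ℝ≥0∞`) of an `ℝ≥0∞`-valued function on `ℤ`,
with the sup norm when `r = ∞`. -/
noncomputable def lpNormZ (r : ℝ≥0∞) (u : ℤ → ℝ≥0∞) : ℝ≥0∞ :=
  if r = ⊤ then ⨆ j : ℤ, u j else (∑' j : ℤ, u j ^ r.toReal) ^ (1 / r.toReal)

/-- The `L^r(μ)` norm (valued in `ℝ≥0∞`) of an `ℝ≥0∞`-valued function,
with the essential sup norm when `r = ∞`. -/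
noncomputable def lpNormMeasure {X : Type*} [MeasurableSpace X] (μ : Measure X)
    (r : ℝ≥0∞) (u : X → ℝ≥0∞) : ℝ≥0∞ :=
  if r = ⊤ then essSup u μ else (∫⁻ x, u x ^ r.toReal ∂μ) ^ (1 / r.toReal)

theorem ENNReal.le_of_forall_natCast_add_one_mul_le {I K A : ℝ≥0∞} (hA : A ≠ ⊤)
    (h : ∀ J : ℕ, ((J : ℝ≥0∞) + 1) * I ≤ ((J : ℝ≥0∞) + 1 + A) * K) : I ≤ K := by
  refine ENNReal.le_of_forall_pos_le_add fun ε hε hK => ?_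
  have hε' : (ε : ℝ≥0∞) ≠ 0 := by exact_mod_cast hε.ne'
  obtain ⟨J, hJ⟩ := ENNReal.exists_nat_gt (ENNReal.div_lt_top (x := A * K) (by finiteness) hε').ne
  have hAK : A * K ≤ ((J : ℝ≥0∞) + 1) * ε :=
    ((ENNReal.div_lt_iff (.inl hε') (.inl ENNReal.coe_ne_top)).mp hJ).le.trans
      (by gcongr; exact le_self_add)
  refine (ENNReal.mul_le_mul_iff_right (a := (J : ℝ≥0∞) + 1) (by positivity) (by finiteness)).mp ?_
  calc ((J : ℝ≥0∞) + 1) * I ≤ ((J : ℝ≥0∞) + 1) * K + A * K := by rw [← add_mul]; exact h J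
    _ ≤ ((J : ℝ≥0∞) + 1) * K + ((J : ℝ≥0∞) + 1) * ε := by gcongr
    _ = ((J : ℝ≥0∞) + 1) * (K + ε) := by ring

theorem ENNReal.le_of_forall_natCast_add_one_rpow_mul_le {I K A : ℝ≥0∞} {s : ℝ}
    (hA : A ≠ ⊤) (hs : 0 ≤ s)
    (h : ∀ J : ℕ, ((J : ℝ≥0∞) + 1) ^ s * I ≤ ((J : ℝ≥0∞) + 1 + A) ^ s * K) : I ≤ K := by
  rcases hs.eq_or_lt with rfl | hs
  · simpa using h 0
  rw [← ENNReal.rpow_le_rpow_iff (inv_pos.mpr hs)]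
  refine ENNReal.le_of_forall_natCast_add_one_mul_le hA fun J => ?_
  have hJ := ENNReal.rpow_le_rpow (h J) (inv_pos.mpr hs).le
  rwa [ENNReal.mul_rpow_of_nonneg _ _ (inv_pos.mpr hs).le,
    ENNReal.mul_rpow_of_nonneg _ _ (inv_pos.mpr hs).le, ENNReal.rpow_rpow_inv hs.ne',
    ENNReal.rpow_rpow_inv hs.ne'] at hJ

theorem AEMeasurable.lpNormZ {X : Type*} [MeasurableSpace X] {μ : Measure X} {r : ℝ≥0∞}
    {u : X → ℤ → ℝ≥0∞} (hu : ∀ j, AEMeasurable (fun x => u x j) μ) :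
    AEMeasurable (fun x => lpNormZ r (u x)) μ := by
  unfold _root_.lpNormZ
  split_ifs
  · exact AEMeasurable.iSup hu
  · exact (AEMeasurable.tsum fun j => (hu j).pow_const _).pow_const _

theorem lpNormZ_enorm_ne_top {E : Type*} [NormedAddCommGroup E] {r : ℝ≥0∞} {φ : ℤ → E}
    (hφ : (Function.support φ).Finite) : lpNormZ r (‖φ ·‖ₑ) ≠ ⊤ := by
  have hsum : ∑ j ∈ hφ.toFinset, ‖φ j‖ₑ ≠ ⊤ := ENNReal.sum_ne_top.mpr fun j _ => enorm_ne_top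
  unfold lpNormZ
  split_ifs with hr
  · refine ne_top_of_le_ne_top hsum (iSup_le fun j => ?_)
    by_cases hj : φ j = 0
    · simp [hj]
    · exact single_le_sum_of_canonicallyOrdered (f := (‖φ ·‖ₑ)) (hφ.mem_toFinset.mpr hj)
  rcases eq_or_ne r 0 with rfl | hr0
  · simp
  have hρ : 0 < r.toReal := ENNReal.toReal_pos hr0 hr
  refine ENNReal.rpow_ne_top_of_nonneg (by positivity) ?_
  rw [tsum_eq_sum (s := hφ.toFinset) fun j hj => by
    simp [Function.notMem_support.mp (by simpa using hj), hρ]]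
  exact ENNReal.sum_ne_top.mpr fun j _ => ENNReal.rpow_ne_top_of_nonneg hρ.le enorm_ne_top

theorem sum_rpow_le_lpNormZ_rpow {r : ℝ≥0∞} (hr : r ≠ 0) (hr_top : r ≠ ⊤) (u : ℤ → ℝ≥0∞)
    (s : Finset ℤ) : ∑ j ∈ s, u j ^ r.toReal ≤ lpNormZ r u ^ r.toReal := by
  rw [lpNormZ, if_neg hr_top, ← ENNReal.rpow_mul, one_div,
    inv_mul_cancel₀ (ENNReal.toReal_pos hr hr_top).ne', ENNReal.rpow_one]
  exact ENNReal.sum_le_tsum s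

theorem le_lpNormZ_top (u : ℤ → ℝ≥0∞) (j : ℤ) : u j ≤ lpNormZ ⊤ u := by
  rw [lpNormZ, if_pos rfl]
  exact le_iSup u j

theorem lpNormMeasure_eq_eLpNorm {X : Type*} [MeasurableSpace X] (μ : Measure X) {r : ℝ≥0∞}
    (hr : r ≠ 0) (u : X → ℝ≥0∞) : lpNormMeasure μ r u = eLpNorm u r μ := by
  unfold lpNormMeasure
  split_ifs with hr_top
  · simp [hr_top, eLpNormEssSup]
  · simp [eLpNorm_eq_lintegral_rpow_enorm_toReal hr hr_top]

theorem ENNReal.HolderTriple.toReal_inv_add_toReal_inv {p q r : ℝ≥0∞} [p.HolderTriple q r]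
    (hr : r ≠ 0) : p.toReal⁻¹ + q.toReal⁻¹ = r.toReal⁻¹ := by
  have hp : p ≠ 0 := ne_bot_of_le_ne_bot hr (HolderTriple.le p q r)
  have hq : q ≠ 0 := ne_bot_of_le_ne_bot hr (HolderTriple.le q p r)
  rw [← ENNReal.toReal_inv, ← ENNReal.toReal_inv, ← ENNReal.toReal_add (by simpa) (by simpa),
    HolderTriple.inv_add_inv_eq_inv p q r, ENNReal.toReal_inv]

section

variable {X : Type*} [MeasurableSpace X] {μ : Measure X}

theorem eLpNorm_iSup_le_of_monotone {r : ℝ≥0∞} {u : ℕ → X → ℝ≥0∞}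
    (hu : ∀ n, AEMeasurable (u n) μ) (hmono : ∀ x, Monotone (u · x)) {B : ℝ≥0∞}
    (h : ∀ n, eLpNorm (u n) r μ ≤ B) : eLpNorm (fun x => ⨆ n, u n x) r μ ≤ B := by
  rcases eq_or_ne r 0 with rfl | hr0
  · simp
  rcases eq_or_ne r ⊤ with rfl | hrtop
  · simp only [eLpNorm_exponent_top] at h ⊢
    refine eLpNormEssSup_le_of_ae_enorm_bound ?_
    have hae : ∀ᵐ x ∂μ, ∀ n, u n x ≤ B := ae_all_iff.mpr fun n =>
      (ae_le_eLpNormEssSup (f := u n)).mono fun x hx => hx.trans (h n)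
    filter_upwards [hae] with x hx
    exact iSup_le hx
  have hρ : 0 < r.toReal := ENNReal.toReal_pos hr0 hrtop
  simp only [eLpNorm_eq_lintegral_rpow_enorm_toReal hr0 hrtop, enorm_eq_self] at h ⊢
  have hpow : ∀ x, (⨆ n, u n x) ^ r.toReal = ⨆ n, u n x ^ r.toReal := fun x =>
    (ENNReal.orderIsoRpow r.toReal hρ).map_iSup _
  simp_rw [hpow]
  rw [lintegral_iSup' (fun n => (hu n).pow_const _)
    (ae_of_all _ fun x m n hmn => ENNReal.rpow_le_rpow (hmono x hmn) hρ.le)]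
  simp only [one_div, ENNReal.rpow_inv_le_iff hρ] at h ⊢
  exact iSup_le h

-- Hölder's inequality, transported from real-valued functions through `ENNReal.toReal`.
theorem eLpNorm_const_mul_mul_le {p q r : ℝ≥0∞} [p.HolderTriple q r] {c : ℝ≥0∞} (hc : c ≠ ⊤)
    {F G : X → ℝ≥0∞} (hF : AEMeasurable F μ) (hG : AEMeasurable G μ)
    (hF_fin : ∀ᵐ x ∂μ, F x ≠ ⊤) (hG_fin : ∀ᵐ x ∂μ, G x ≠ ⊤) :
    eLpNorm (fun x => c * F x * G x) r μ ≤ c * eLpNorm F p μ * eLpNorm G q μ := by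
  have hHolder := eLpNorm_le_eLpNorm_mul_eLpNorm_of_nnnorm (μ := μ) (p := p) (q := q) (r := r)
    hF.ennreal_toReal.aestronglyMeasurable hG.ennreal_toReal.aestronglyMeasurable
    (fun a b : ℝ => c.toReal * a * b) c.toNNReal
    (ae_of_all _ fun x => by simp [nnnorm_mul, ENNReal.toReal])
  have hcoe : ((c.toNNReal : ℝ≥0) : ℝ≥0∞) = c := ENNReal.coe_toNNReal hc
  rw [hcoe] at hHolder
  have htoReal : ∀ {x : ℝ≥0∞}, x ≠ ⊤ → ‖x.toReal‖ₑ = x := fun hx => by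
    rw [Real.enorm_of_nonneg ENNReal.toReal_nonneg, ENNReal.ofReal_toReal hx]
  convert hHolder using 2 <;> [skip; congr 1; skip] <;> refine eLpNorm_congr_enorm_ae ?_
  · filter_upwards [hF_fin, hG_fin] with x hFx hGx
    simp only [enorm_mul, htoReal hc, htoReal hFx, htoReal hGx, enorm_eq_self]
  · filter_upwards [hF_fin] with x hx using (htoReal hx).symm
  · filter_upwards [hG_fin] with x hx using (htoReal hx).symm

theorem MeasureTheory.MeasurePreserving.lintegral_birkhoffSum {T : X → X}
    (hT : MeasurePreserving T μ μ) {u : X → ℝ≥0∞} (hu : AEMeasurable u μ) (n : ℕ) :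
    ∫⁻ x, birkhoffSum T u n x ∂μ = n * ∫⁻ x, u x ∂μ := by
  have hcomp : ∀ k, ∫⁻ x, u (T^[k] x) ∂μ = ∫⁻ x, u x ∂μ := fun k => by
    have hk := hT.iterate k
    rw [← lintegral_map' (hk.map_eq.symm ▸ hu) hk.aemeasurable, hk.map_eq]
  simp only [birkhoffSum]
  rw [lintegral_finsetSum' (f := fun k x => u (T^[k] x)) _ fun k _ =>
    hu.comp_quasiMeasurePreserving (hT.iterate k).quasiMeasurePreserving]
  simp [hcomp]

-- `r.toReal⁻¹ = 0` for `r = ∞`, where the factor `(J + 1) ^ r.toReal⁻¹` is `1`.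
theorem rpow_mul_eLpNorm_le_of_iterate_le {T : X → X} (hT : MeasurePreserving T μ μ)
    {u : X → ℝ≥0∞} (hu : AEMeasurable u μ) {v : X → ℤ → ℝ≥0∞} {r : ℝ≥0∞} (J : ℕ)
    (huv : ∀ x, ∀ i ≤ J, u (T^[i] x) ≤ v x i) :
    ((J : ℝ≥0∞) + 1) ^ r.toReal⁻¹ * eLpNorm u r μ ≤ eLpNorm (fun x => lpNormZ r (v x)) r μ := by
  rcases eq_or_ne r 0 with rfl | hr0
  · simp
  rcases eq_or_ne r ⊤ with rfl | hr_top
  · simpa using eLpNorm_mono_enorm (μ := μ) (p := ⊤) (f := u) (g := fun x => lpNormZ ⊤ (v x))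
      fun x => (huv x 0 (Nat.zero_le J)).trans (le_lpNormZ_top (v x) 0)
  have hρ : 0 < r.toReal := ENNReal.toReal_pos hr0 hr_top
  have horbit : ∀ x, birkhoffSum T (fun y => u y ^ r.toReal) (J + 1) x
      ≤ lpNormZ r (v x) ^ r.toReal := fun x =>
    calc ∑ i ∈ range (J + 1), u (T^[i] x) ^ r.toReal
        ≤ ∑ i ∈ range (J + 1), v x i ^ r.toReal := by
          gcongr with i hi
          exact huv x i (Nat.lt_succ_iff.mp (mem_range.mp hi))
      _ = ∑ j ∈ (range (J + 1)).map Nat.castEmbedding, v x j ^ r.toReal := by simp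
      _ ≤ lpNormZ r (v x) ^ r.toReal := sum_rpow_le_lpNormZ_rpow hr0 hr_top _ _
  simp only [eLpNorm_eq_lintegral_rpow_enorm_toReal hr0 hr_top, enorm_eq_self, one_div]
  rw [← ENNReal.mul_rpow_of_nonneg _ _ (inv_nonneg.mpr hρ.le)]
  gcongr
  calc ((J : ℝ≥0∞) + 1) * ∫⁻ x, u x ^ r.toReal ∂μ
      = ∫⁻ x, birkhoffSum T (fun y => u y ^ r.toReal) (J + 1) x ∂μ := by
        rw [hT.lintegral_birkhoffSum (hu.pow_const _)]; push_cast; rfl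
    _ ≤ ∫⁻ x, lpNormZ r (v x) ^ r.toReal ∂μ := lintegral_mono horbit

end

section OrbitWindow

variable {X E : Type*} [NormedAddCommGroup E] {T : X → X}

noncomputable def orbitWindow (T : X → X) (f : X → E) (L : ℕ) (x : X) : ℤ → E :=
  (Set.Ico 0 (L : ℤ)).indicator fun j => f (T^[j.toNat] x)

theorem orbitWindow_support_finite (f : X → E) (L : ℕ) (x : X) :
    (Function.support (orbitWindow T f L x)).Finite :=
  (Set.finite_Ico _ _).subset Set.support_indicator_subset

theorem orbitWindow_natCast_add {f : X → E} {L i : ℕ} {m : ℤ} (hm : 0 ≤ m) (h : i + m < L)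
    (x : X) : orbitWindow T f L x (i + m) = f (T^[m.toNat] (T^[i] x)) := by
  rw [orbitWindow, Set.indicator_of_mem (Set.mem_Ico.mpr ⟨by omega, h⟩),
    ← Function.iterate_add_apply]
  congr 2
  omega

theorem lpNormZ_orbitWindow_rpow {p : ℝ≥0∞} (hp : p ≠ 0) (hp_top : p ≠ ⊤) (f : X → E) (L : ℕ)
    (x : X) : lpNormZ p (fun j => ‖orbitWindow T f L x j‖ₑ) ^ p.toReal
      = birkhoffSum T (fun y => ‖f y‖ₑ ^ p.toReal) L x := by
  have hρ : 0 < p.toReal := ENNReal.toReal_pos hp hp_top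
  rw [lpNormZ, if_neg hp_top, ← ENNReal.rpow_mul, one_div, inv_mul_cancel₀ hρ.ne',
    ENNReal.rpow_one, tsum_eq_sum (s := (range L).map Nat.castEmbedding), sum_map]
  · refine sum_congr rfl fun i hi => ?_
    simpa using congrArg (‖·‖ₑ ^ p.toReal)
      (orbitWindow_natCast_add (T := T) (f := f) le_rfl (by simpa using hi) x)
  · intro j hj
    rw [orbitWindow, Set.indicator_of_notMem, enorm_zero, ENNReal.zero_rpow_of_pos hρ]
    intro hj'
    obtain ⟨h0, hL⟩ := Set.mem_Ico.mp hj'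
    exact hj (mem_map.mpr ⟨j.toNat, mem_range.mpr (by omega), by simp; omega⟩)

theorem lpNormZ_top_orbitWindow_le {f : X → E} {B : ℝ≥0∞} {x : X}
    (hB : ∀ i, ‖f (T^[i] x)‖ₑ ≤ B) (L : ℕ) :
    lpNormZ ⊤ (fun j => ‖orbitWindow T f L x j‖ₑ) ≤ B := by
  rw [lpNormZ, if_pos rfl]
  refine iSup_le fun j => ?_
  rw [orbitWindow, Set.indicator_apply]
  split_ifs
  · exact hB _
  · simp

theorem eLpNorm_lpNormZ_orbitWindow_le [MeasurableSpace X] {μ : Measure X}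
    (hT : MeasurePreserving T μ μ) {f : X → E} (hf : AEStronglyMeasurable f μ) (p : ℝ≥0∞)
    (L : ℕ) : eLpNorm (fun x => lpNormZ p fun j => ‖orbitWindow T f L x j‖ₑ) p μ
      ≤ (L : ℝ≥0∞) ^ p.toReal⁻¹ * eLpNorm f p μ := by
  rcases eq_or_ne p 0 with rfl | hp0
  · simp
  rcases eq_or_ne p ⊤ with rfl | hp_top
  · simp only [ENNReal.toReal_top, inv_zero, ENNReal.rpow_zero, one_mul, eLpNorm_exponent_top]
    refine eLpNormEssSup_le_of_ae_enorm_bound ?_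
    have hae : ∀ᵐ x ∂μ, ∀ i, ‖f (T^[i] x)‖ₑ ≤ eLpNormEssSup f μ := ae_all_iff.mpr fun i =>
      (hT.iterate i).quasiMeasurePreserving.ae ae_le_eLpNormEssSup
    filter_upwards [hae] with x hx using lpNormZ_top_orbitWindow_le hx L
  have hρ : 0 < p.toReal := ENNReal.toReal_pos hp0 hp_top
  simp only [eLpNorm_eq_lintegral_rpow_enorm_toReal hp0 hp_top, enorm_eq_self, one_div,
    lpNormZ_orbitWindow_rpow hp0 hp_top]
  rw [hT.lintegral_birkhoffSum (hf.enorm.pow_const _),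
    ENNReal.mul_rpow_of_nonneg _ _ (inv_nonneg.mpr hρ.le)]

theorem aemeasurable_lpNormZ_orbitWindow [MeasurableSpace X] {μ : Measure X}
    (hT : MeasurePreserving T μ μ) {f : X → E} (hf : AEStronglyMeasurable f μ) (p : ℝ≥0∞) (L : ℕ) :
    AEMeasurable (fun x => lpNormZ p fun j => ‖orbitWindow T f L x j‖ₑ) μ := by
  refine AEMeasurable.lpNormZ fun j => AEStronglyMeasurable.enorm ?_
  unfold orbitWindow
  by_cases hj : j ∈ Set.Ico 0 (L : ℤ)
  · simp only [Set.indicator_of_mem hj]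
    exact hf.comp_quasiMeasurePreserving (hT.iterate j.toNat).quasiMeasurePreserving
  · simpa [Set.indicator_of_notMem hj] using aestronglyMeasurable_const

end OrbitWindow

section Averages

variable {X : Type*} (T : X → X) (a : ℕ → ℂ) (P Q : Polynomial ℤ)

noncomputable def bilinearAverage (f g : X → ℂ) (N : ℕ) (x : X) : ℂ :=
  (1 / (N : ℂ)) * ∑ n ∈ Icc 1 N,
    a n * f (T^[(P.eval (n : ℤ)).toNat] x) * g (T^[(Q.eval (n : ℤ)).toNat] x)

noncomputable def truncatedBilinearMaximal (f g : X → ℂ) (M : ℕ) (x : X) : ℝ≥0∞ :=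
  ⨆ N ∈ Icc 1 M, ‖bilinearAverage T a P Q f g N x‖ₑ

noncomputable def bilinearAverageInt (φ ψ : ℤ → ℂ) (N : ℕ) (j : ℤ) : ℂ :=
  (1 / (N : ℂ)) * ∑ n ∈ Icc 1 N, a n * φ (j + P.eval (n : ℤ)) * ψ (j + Q.eval (n : ℤ))

noncomputable def bilinearMaximalInt (φ ψ : ℤ → ℂ) (j : ℤ) : ℝ≥0∞ :=
  ⨆ N, ⨆ _ : 1 ≤ N, ‖bilinearAverageInt a P Q φ ψ N j‖ₑ

variable {T a P Q}

theorem iSup_truncatedBilinearMaximal (f g : X → ℂ) (x : X) :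
    ⨆ M, truncatedBilinearMaximal T a P Q f g M x
      = ⨆ N, ⨆ _ : 1 ≤ N, ‖bilinearAverage T a P Q f g N x‖ₑ := by
  refine le_antisymm (iSup_le fun M => iSup₂_le fun N hN => ?_) (iSup₂_le fun N hN => ?_)
  · exact le_iSup₂_of_le N (mem_Icc.mp hN).1 le_rfl
  · exact le_iSup_of_le N (le_iSup₂_of_le N (mem_Icc.mpr ⟨hN, le_rfl⟩) le_rfl)

theorem truncatedBilinearMaximal_mono (f g : X → ℂ) (x : X) :
    Monotone (truncatedBilinearMaximal T a P Q f g · x) := fun _ _ hMM' =>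
  iSup₂_le fun N hN => le_iSup₂_of_le N (Icc_subset_Icc_right hMM' hN) le_rfl

theorem bilinearAverage_iterate (hPnat : ∀ n : ℕ, 0 ≤ P.eval (n : ℤ))
    (hQnat : ∀ n : ℕ, 0 ≤ Q.eval (n : ℤ)) {N L i : ℕ}
    (hL : ∀ n ∈ Icc 1 N, i + P.eval (n : ℤ) < L ∧ i + Q.eval (n : ℤ) < L) (f g : X → ℂ)
    (x : X) : bilinearAverage T a P Q f g N (T^[i] x)
      = bilinearAverageInt a P Q (orbitWindow T f L x) (orbitWindow T g L x) N i := by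
  unfold bilinearAverage bilinearAverageInt
  congr 1
  refine sum_congr rfl fun n hn => ?_
  rw [orbitWindow_natCast_add (hPnat n) (hL n hn).1, orbitWindow_natCast_add (hQnat n) (hL n hn).2]

theorem truncatedBilinearMaximal_iterate_le (hPnat : ∀ n : ℕ, 0 ≤ P.eval (n : ℤ))
    (hQnat : ∀ n : ℕ, 0 ≤ Q.eval (n : ℤ)) {M L i : ℕ}
    (hL : ∀ n ∈ Icc 1 M, i + P.eval (n : ℤ) < L ∧ i + Q.eval (n : ℤ) < L) (f g : X → ℂ)
    (x : X) : truncatedBilinearMaximal T a P Q f g M (T^[i] x)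
      ≤ bilinearMaximalInt a P Q (orbitWindow T f L x) (orbitWindow T g L x) i := by
  refine iSup₂_le fun N hN => ?_
  rw [bilinearAverage_iterate hPnat hQnat fun n hn =>
    hL n (Icc_subset_Icc_right (mem_Icc.mp hN).2 hn)]
  exact le_iSup₂_of_le N (mem_Icc.mp hN).1 le_rfl

theorem aemeasurable_truncatedBilinearMaximal [MeasurableSpace X] {μ : Measure X}
    (hT : MeasurePreserving T μ μ) (a : ℕ → ℂ) (P Q : Polynomial ℤ) {f g : X → ℂ}
    (hf : AEStronglyMeasurable f μ) (hg : AEStronglyMeasurable g μ) (M : ℕ) :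
    AEMeasurable (truncatedBilinearMaximal T a P Q f g M) μ := by
  have hcomp : ∀ {h : X → ℂ}, AEStronglyMeasurable h μ → ∀ k,
      AEStronglyMeasurable (fun x => h (T^[k] x)) μ := fun hh k =>
    hh.comp_quasiMeasurePreserving (hT.iterate k).quasiMeasurePreserving
  refine AEMeasurable.iSup fun N => AEMeasurable.iSup fun _ => AEStronglyMeasurable.enorm ?_
  exact aestronglyMeasurable_const.mul (Finset.aestronglyMeasurable_fun_sum _ fun n _ =>
    (aestronglyMeasurable_const.mul (hcomp hf _)).mul (hcomp hg _))

end Averages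

theorem eLpNorm_truncatedBilinearMaximal_le {X : Type*} [MeasurableSpace X] {μ : Measure X}
    {T : X → X} (hT : MeasurePreserving T μ μ) {a : ℕ → ℂ} {P Q : Polynomial ℤ}
    (hPnat : ∀ n : ℕ, 0 ≤ P.eval (n : ℤ)) (hQnat : ∀ n : ℕ, 0 ≤ Q.eval (n : ℤ))
    {p q r : ℝ≥0∞} [p.HolderTriple q r] (hr : r ≠ 0) {C : ℝ≥0∞} (hC : C ≠ ⊤)
    (hbound : ∀ φ ψ : ℤ → ℂ, (Function.support φ).Finite → (Function.support ψ).Finite →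
      lpNormZ r (bilinearMaximalInt a P Q φ ψ) ≤ C * lpNormZ p (‖φ ·‖ₑ) * lpNormZ q (‖ψ ·‖ₑ))
    {f g : X → ℂ} (hf : AEStronglyMeasurable f μ) (hg : AEStronglyMeasurable g μ) (M : ℕ) :
    eLpNorm (truncatedBilinearMaximal T a P Q f g M) r μ ≤ C * eLpNorm f p μ * eLpNorm g q μ := by
  obtain ⟨A, hA⟩ : ∃ A : ℕ, ∀ n ∈ Icc 1 M, P.eval (n : ℤ) ≤ A ∧ Q.eval (n : ℤ) ≤ A :=
    ⟨∑ n ∈ Icc 1 M, ((P.eval (n : ℤ)).toNat + (Q.eval (n : ℤ)).toNat), fun n hn => by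
      have := single_le_sum_of_canonicallyOrdered
        (f := fun n : ℕ => (P.eval (n : ℤ)).toNat + (Q.eval (n : ℤ)).toNat) hn
      omega⟩
  refine ENNReal.le_of_forall_natCast_add_one_rpow_mul_le (A := A) (s := r.toReal⁻¹)
    (ENNReal.natCast_ne_top A) (inv_nonneg.mpr ENNReal.toReal_nonneg) fun J => ?_
  set L := J + 1 + A
  calc ((J : ℝ≥0∞) + 1) ^ r.toReal⁻¹ * eLpNorm (truncatedBilinearMaximal T a P Q f g M) r μ
      ≤ eLpNorm (fun x => lpNormZ r
          (bilinearMaximalInt a P Q (orbitWindow T f L x) (orbitWindow T g L x))) r μ :=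
        rpow_mul_eLpNorm_le_of_iterate_le hT
          (aemeasurable_truncatedBilinearMaximal hT a P Q hf hg M) J fun x i hi =>
            truncatedBilinearMaximal_iterate_le hPnat hQnat
              (fun n hn => by have := hA n hn; omega) f g x
    _ ≤ eLpNorm (fun x => C * lpNormZ p (‖orbitWindow T f L x ·‖ₑ)
          * lpNormZ q (‖orbitWindow T g L x ·‖ₑ)) r μ :=
        eLpNorm_mono_enorm fun x =>
          hbound _ _ (orbitWindow_support_finite f L x) (orbitWindow_support_finite g L x)
    _ ≤ C * eLpNorm (fun x => lpNormZ p (‖orbitWindow T f L x ·‖ₑ)) p μ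
          * eLpNorm (fun x => lpNormZ q (‖orbitWindow T g L x ·‖ₑ)) q μ :=
        eLpNorm_const_mul_mul_le hC (aemeasurable_lpNormZ_orbitWindow hT hf p L)
          (aemeasurable_lpNormZ_orbitWindow hT hg q L)
          (ae_of_all _ fun x => lpNormZ_enorm_ne_top (orbitWindow_support_finite f L x))
          (ae_of_all _ fun x => lpNormZ_enorm_ne_top (orbitWindow_support_finite g L x))
    _ ≤ C * ((L : ℝ≥0∞) ^ p.toReal⁻¹ * eLpNorm f p μ)
          * ((L : ℝ≥0∞) ^ q.toReal⁻¹ * eLpNorm g q μ) := by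
        gcongr
        exacts [eLpNorm_lpNormZ_orbitWindow_le hT hf p L, eLpNorm_lpNormZ_orbitWindow_le hT hg q L]
    _ = ((J : ℝ≥0∞) + 1 + A) ^ r.toReal⁻¹ * (C * eLpNorm f p μ * eLpNorm g q μ) := by
        rw [← ENNReal.HolderTriple.toReal_inv_add_toReal_inv (p := p) (q := q) hr,
          ENNReal.rpow_add_of_nonneg _ _ (inv_nonneg.mpr ENNReal.toReal_nonneg)
            (inv_nonneg.mpr ENNReal.toReal_nonneg)]
        push_cast [L]
        ring

theorem calderon_transference_strong_type_general
    {X : Type*} [MeasurableSpace X] (μ : Measure X)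
    (T : X ≃ᵐ X) (hT : MeasurePreserving (⇑T) μ μ)
    (a : ℕ → ℂ) (P Q : Polynomial ℤ)
    (hPnat : ∀ n : ℕ, 0 ≤ P.eval (n : ℤ)) (hQnat : ∀ n : ℕ, 0 ≤ Q.eval (n : ℤ))
    (p q r : ℝ≥0∞) (hr : 1 ≤ r)
    (hpqr : 1 / r = 1 / p + 1 / q)
    (C : ℝ)
    (hyp : ∀ φ ψ : ℤ → ℂ, (Function.support φ).Finite → (Function.support ψ).Finite →
      lpNormZ r (fun j : ℤ => ⨆ N : ℕ, ⨆ _ : 1 ≤ N,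
          (‖(1 / (N : ℂ)) * ∑ n ∈ Finset.Icc 1 N,
              a n * φ (j + P.eval (n : ℤ)) * ψ (j + Q.eval (n : ℤ))‖₊ : ℝ≥0∞))
        ≤ ENNReal.ofReal C * lpNormZ p (fun j => (‖φ j‖₊ : ℝ≥0∞))
            * lpNormZ q (fun j => (‖ψ j‖₊ : ℝ≥0∞)))
    (f g : X → ℂ) (hf : MemLp f p μ) (hg : MemLp g q μ) :
    lpNormMeasure μ r (fun x : X => ⨆ N : ℕ, ⨆ _ : 1 ≤ N,
        (‖(1 / (N : ℂ)) * ∑ n ∈ Finset.Icc 1 N,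
            a n * f ((⇑T)^[(P.eval (n : ℤ)).toNat] x) * g ((⇑T)^[(Q.eval (n : ℤ)).toNat] x)‖₊ : ℝ≥0∞))
      ≤ ENNReal.ofReal C * eLpNorm f p μ * eLpNorm g q μ := by
  have hr0 : r ≠ 0 := (zero_lt_one.trans_le hr).ne'
  have : p.HolderTriple q r := ⟨by simpa only [one_div] using hpqr.symm⟩
  change lpNormMeasure μ r (fun x => ⨆ N, ⨆ _ : 1 ≤ N, ‖bilinearAverage T a P Q f g N x‖ₑ) ≤ _
  simp only [lpNormMeasure_eq_eLpNorm μ hr0, ← iSup_truncatedBilinearMaximal]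
  exact eLpNorm_iSup_le_of_monotone (aemeasurable_truncatedBilinearMaximal hT a P Q hf.1 hg.1)
    (truncatedBilinearMaximal_mono f g) fun M =>
      eLpNorm_truncatedBilinearMaximal_le hT hPnat hQnat hr0 ENNReal.ofReal_ne_top hyp hf.1 hg.1 M

/-- Calderón transference principle, strong type: a strong `(p,q,r)` bound for the
bilinear maximal function of the weighted averages along polynomials `P, Q` on the
integers transfers to any dynamical system. -/
theorem calderon_transference_strong_type
    {X : Type*} [MeasurableSpace X] (μ : Measure X) [IsProbabilityMeasure μ]
    (T : X ≃ᵐ X) (hT : MeasurePreserving (⇑T) μ μ)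
    (a : ℕ → ℂ) (P Q : Polynomial ℤ)
    (hP : 0 < P.natDegree) (hQ : 0 < Q.natDegree)
    (hPnat : ∀ n : ℕ, 0 ≤ P.eval (n : ℤ)) (hQnat : ∀ n : ℕ, 0 ≤ Q.eval (n : ℤ))
    (p q r : ℝ≥0∞) (hp : 1 ≤ p) (hq : 1 ≤ q) (hr : 1 ≤ r)
    (hpqr : 1 / r = 1 / p + 1 / q)
    (C : ℝ) (hC : 0 < C)
    (hyp : ∀ φ ψ : ℤ → ℂ, (Function.support φ).Finite → (Function.support ψ).Finite →
      lpNormZ r (fun j : ℤ => ⨆ N : ℕ, ⨆ _ : 1 ≤ N,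
          (‖(1 / (N : ℂ)) * ∑ n ∈ Finset.Icc 1 N,
              a n * φ (j + P.eval (n : ℤ)) * ψ (j + Q.eval (n : ℤ))‖₊ : ℝ≥0∞))
        ≤ ENNReal.ofReal C * lpNormZ p (fun j => (‖φ j‖₊ : ℝ≥0∞))
            * lpNormZ q (fun j => (‖ψ j‖₊ : ℝ≥0∞)))
    (f g : X → ℂ) (hf : MemLp f p μ) (hg : MemLp g q μ) :
    lpNormMeasure μ r (fun x : X => ⨆ N : ℕ, ⨆ _ : 1 ≤ N,
        (‖(1 / (N : ℂ)) * ∑ n ∈ Finset.Icc 1 N,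
            a n * f ((⇑T)^[(P.eval (n : ℤ)).toNat] x) * g ((⇑T)^[(Q.eval (n : ℤ)).toNat] x)‖₊ : ℝ≥0∞))
      ≤ ENNReal.ofReal C * eLpNorm f p μ * eLpNorm g q μ :=
  calderon_transference_strong_type_general μ T hT a P Q hPnat hQnat p q r hr hpqr C hyp f g hf hg
end

section
/- There exist absolute constants c, C > 0 such that for every positive integer J, every δ > 0, and every 1-bounded function ψ : {1, …, J} → ℂ (i.e. |ψ(n)| ≤ 1 for all n), there is a finite set E₀ ⊂ 𝕋 = ℝ/ℤ such that: (1) any two distinct points λ, γ ∈ E₀ satisfy |λ − γ| ≥ c/J; (2) |E₀| ≤ C δ^{−2}; (3) { λ ∈ 𝕋 : |∑_{n=1}^{J} ψ(n) e^{2πinλ}| > δ J } ⊆ E₀(c/J). -/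
open scoped Real
open MeasureTheory Complex

/-!
Take `E₀` to be a maximal `1/J`-separated subset of the level set: maximality is exactly the
covering property. The cardinality bound, which also shows that a maximal such set exists, follows
from a large sieve inequality `∑_{t ∈ E} |P t|² ≤ 3 (1 + 4π) J ∑ |ψ n|²` for `1/J`-separated `E`,
where `P t = ∑_{n ≤ J} ψ n e(n t)`, because `|P t| > δJ` on `E` and `∑ |ψ n|² ≤ J`. The large sieve is Gallagher's argument: `|P x|²`
is at most the mean of `|P|²` plus the integral of `|(|P|²)'| ≤ 2|P||P'|` over the interval of
length `1/J` centred at `x`; these intervals are disjoint, and Parseval bounds the total using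
`‖P'‖₂ ≤ 2πJ ‖P‖₂`.
-/

theorem abs_sub_le_integral_abs_of_hasDerivAt {f g : ℝ → ℝ} (hf : ∀ x, HasDerivAt f (g x) x)
    (hg : Continuous g) {a b y z : ℝ} (hy : y ∈ Set.Icc a b) (hz : z ∈ Set.Icc a b) :
    |f z - f y| ≤ ∫ t in a..b, |g t| := by
  wlog hyz : y ≤ z generalizing y z
  · rw [abs_sub_comm]; exact this hz hy (le_of_not_ge hyz)
  rw [← intervalIntegral.integral_eq_sub_of_hasDerivAt (fun t _ => hf t)
    (hg.intervalIntegrable _ _)]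
  calc |∫ t in y..z, g t| ≤ ∫ t in y..z, |g t| := intervalIntegral.abs_integral_le_integral_abs hyz
    _ ≤ ∫ t in a..b, |g t| :=
      intervalIntegral.integral_mono_interval hy.1 hyz hz.2 (.of_forall fun t => abs_nonneg _)
        (hg.abs.intervalIntegrable _ _)

theorem le_inv_mul_integral_add_integral_abs_of_hasDerivAt {f g : ℝ → ℝ}
    (hf : ∀ x, HasDerivAt f (g x) x) (hg : Continuous g) (x₀ : ℝ) {h : ℝ} (hh : 0 < h) :
    f x₀ ≤ (2 * h)⁻¹ * (∫ y in (x₀ - h)..(x₀ + h), f y) + ∫ y in (x₀ - h)..(x₀ + h), |g y| := by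
  set B := ∫ y in (x₀ - h)..(x₀ + h), |g y|
  have hle : x₀ - h ≤ x₀ + h := by linarith
  have hf_cont : Continuous f := continuous_iff_continuousAt.2 fun x => (hf x).continuousAt
  have hbelow : ∀ y ∈ Set.Icc (x₀ - h) (x₀ + h), f x₀ - B ≤ f y := fun y hy => by
    have := abs_sub_le_integral_abs_of_hasDerivAt hf hg hy ⟨by linarith, by linarith⟩
    linarith [le_abs_self (f x₀ - f y)]
  have hint := intervalIntegral.integral_mono_on hle (intervalIntegrable_const (μ := volume))
    (hf_cont.intervalIntegrable _ _) hbelow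
  rw [intervalIntegral.integral_const, smul_eq_mul, show x₀ + h - (x₀ - h) = 2 * h by ring] at hint
  have : f x₀ - B ≤ (2 * h)⁻¹ * ∫ y in (x₀ - h)..(x₀ + h), f y := by
    rw [inv_mul_eq_div, le_div_iff₀ (by positivity)]; linarith
  linarith

theorem two_mul_le_mul_sq_add_inv_mul_sq {A : ℝ} (hA : 0 < A) (u v : ℝ) :
    2 * u * v ≤ A * u ^ 2 + A⁻¹ * v ^ 2 := by
  have : 0 ≤ A⁻¹ * (A * u - v) ^ 2 := by positivity
  calc 2 * u * v = A * u ^ 2 + A⁻¹ * v ^ 2 - A⁻¹ * (A * u - v) ^ 2 := by field_simp; ring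
    _ ≤ _ := by linarith

theorem sq_norm_le_integral_of_hasDerivAt {E : Type*} [NormedAddCommGroup E]
    [InnerProductSpace ℝ E] {F F' : ℝ → E} (hF : ∀ x, HasDerivAt F (F' x) x)
    (hF' : Continuous F') (x₀ : ℝ) {h A : ℝ} (hh : 0 < h) (hA : 0 < A) :
    ‖F x₀‖ ^ 2 ≤ ∫ y in (x₀ - h)..(x₀ + h), (((2 * h)⁻¹ + A) * ‖F y‖ ^ 2 + A⁻¹ * ‖F' y‖ ^ 2) := by
  have hF_cont : Continuous F := continuous_iff_continuousAt.2 fun x => (hF x).continuousAt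
  have hderiv_le : ∀ y, |2 * inner ℝ (F y) (F' y)| ≤ A * ‖F y‖ ^ 2 + A⁻¹ * ‖F' y‖ ^ 2 :=
    fun y => calc
      |2 * inner ℝ (F y) (F' y)| = 2 * |inner ℝ (F y) (F' y)| := by simp [abs_mul]
      _ ≤ 2 * ‖F y‖ * ‖F' y‖ := by linarith [abs_real_inner_le_norm (F y) (F' y)]
      _ ≤ _ := two_mul_le_mul_sq_add_inv_mul_sq hA _ _
  calc ‖F x₀‖ ^ 2
      ≤ (2 * h)⁻¹ * (∫ y in (x₀ - h)..(x₀ + h), ‖F y‖ ^ 2)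
        + ∫ y in (x₀ - h)..(x₀ + h), |2 * inner ℝ (F y) (F' y)| :=
        le_inv_mul_integral_add_integral_abs_of_hasDerivAt (fun x => (hF x).norm_sq)
          (by fun_prop) x₀ hh
    _ ≤ (2 * h)⁻¹ * (∫ y in (x₀ - h)..(x₀ + h), ‖F y‖ ^ 2)
        + ∫ y in (x₀ - h)..(x₀ + h), (A * ‖F y‖ ^ 2 + A⁻¹ * ‖F' y‖ ^ 2) := by
        gcongr
        refine intervalIntegral.integral_mono_on (by linarith) ?_ ?_ fun y _ => hderiv_le y
        all_goals exact Continuous.intervalIntegrable (by fun_prop) _ _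
    _ = _ := by
        rw [← intervalIntegral.integral_const_mul, ← intervalIntegral.integral_add]
        · congr 1; ext y; ring
        all_goals exact Continuous.intervalIntegrable (by fun_prop) _ _

theorem sum_intervalIntegral_le_of_pairwiseDisjoint {ι : Type*} (E : Finset ι) (x : ι → ℝ)
    {h a b : ℝ} (hh : 0 ≤ h) (hab : a ≤ b) (hx : ∀ i ∈ E, a ≤ x i - h ∧ x i + h ≤ b)
    (hsep : (E : Set ι).Pairwise fun i j => 2 * h ≤ |x i - x j|)
    {g : ℝ → ℝ} (hg : Continuous g) (hg0 : ∀ y, 0 ≤ g y) :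
    ∑ i ∈ E, ∫ y in (x i - h)..(x i + h), g y ≤ ∫ y in a..b, g y := by
  have hdisj : (E : Set ι).PairwiseDisjoint fun i => Set.Ioc (x i - h) (x i + h) := by
    intro i hi j hj hij
    rw [Function.onFun, Set.disjoint_left]
    rintro y ⟨hyi, hyi'⟩ ⟨hyj, hyj'⟩
    have hsep_ij : 2 * h ≤ |x i - x j| := hsep hi hj hij
    rcases le_abs'.1 hsep_ij with h' | h' <;> linarith
  calc ∑ i ∈ E, ∫ y in (x i - h)..(x i + h), g y
      = ∫ y in ⋃ i ∈ E, Set.Ioc (x i - h) (x i + h), g y := by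
        rw [integral_biUnion_finset E (fun _ _ => measurableSet_Ioc) hdisj
          fun _ _ => hg.integrableOn_Ioc]
        exact Finset.sum_congr rfl fun i _ => intervalIntegral.integral_of_le (by linarith)
    _ ≤ ∫ y in Set.Ioc a b, g y := by
        refine setIntegral_mono_set hg.integrableOn_Ioc (.of_forall hg0) ?_
        exact (Set.iUnion₂_subset fun i hi =>
          Set.Ioc_subset_Ioc (hx i hi).1 (hx i hi).2).eventuallyLE
    _ = ∫ y in a..b, g y := (intervalIntegral.integral_of_le hab).symm

theorem Function.Periodic.intervalIntegral_neg_one_two {g : ℝ → ℝ}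
    (hper : Function.Periodic g 1) (hg : Continuous g) :
    ∫ y in (-1 : ℝ)..2, g y = 3 * ∫ y in (0 : ℝ)..1, g y := by
  have := hper.intervalIntegral_add_zsmul_eq 3 (-1) fun _ _ => hg.intervalIntegrable _ _
  rw [hper.intervalIntegral_add_eq (-1) 0] at this
  norm_num at this
  exact this

theorem sum_sq_norm_le_integral_of_periodic {E : Type*} [NormedAddCommGroup E]
    [InnerProductSpace ℝ E] {F F' : ℝ → E} (hF : ∀ x, HasDerivAt F (F' x) x)
    (hF' : Continuous F') (hF_per : Function.Periodic F 1) (hF'_per : Function.Periodic F' 1)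
    {ι : Type*} (T : Finset ι) (x : ι → ℝ) (hx : ∀ i ∈ T, x i ∈ Set.Ico (0 : ℝ) 1) {h A : ℝ}
    (hh : 0 < h) (hh1 : h ≤ 1) (hA : 0 < A)
    (hsep : (T : Set ι).Pairwise fun i j => 2 * h ≤ |x i - x j|) :
    ∑ i ∈ T, ‖F (x i)‖ ^ 2 ≤
      3 * ∫ y in (0 : ℝ)..1, (((2 * h)⁻¹ + A) * ‖F y‖ ^ 2 + A⁻¹ * ‖F' y‖ ^ 2) := by
  have hF_cont : Continuous F := continuous_iff_continuousAt.2 fun x => (hF x).continuousAt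
  calc ∑ i ∈ T, ‖F (x i)‖ ^ 2
      ≤ ∑ i ∈ T, ∫ y in (x i - h)..(x i + h), (((2 * h)⁻¹ + A) * ‖F y‖ ^ 2 + A⁻¹ * ‖F' y‖ ^ 2) :=
        Finset.sum_le_sum fun i _ => sq_norm_le_integral_of_hasDerivAt hF hF' (x i) hh hA
    _ ≤ ∫ y in (-1 : ℝ)..2, (((2 * h)⁻¹ + A) * ‖F y‖ ^ 2 + A⁻¹ * ‖F' y‖ ^ 2) :=
        sum_intervalIntegral_le_of_pairwiseDisjoint T x hh.le (by norm_num)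
          (fun i hi => ⟨by linarith [(hx i hi).1], by linarith [(hx i hi).2]⟩) hsep
          (by fun_prop) fun y => by positivity
    _ = _ := Function.Periodic.intervalIntegral_neg_one_two (fun y => by rw [hF_per, hF'_per])
          (by fun_prop)

noncomputable def expSum (s : Finset ℕ) (a : ℕ → ℂ) (t : AddCircle (1 : ℝ)) : ℂ :=
  ∑ n ∈ s, a n * fourier (n : ℤ) t

@[fun_prop]
theorem continuous_expSum (s : Finset ℕ) (a : ℕ → ℂ) : Continuous (expSum s a) := by
  unfold expSum; fun_prop

theorem hasDerivAt_expSum_coe (s : Finset ℕ) (a : ℕ → ℂ) (x : ℝ) :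
    HasDerivAt (fun y : ℝ => expSum s a y) (expSum s (fun n => 2 * π * I * n * a n) x) x := by
  unfold expSum
  refine HasDerivAt.fun_sum fun n _ => ((hasDerivAt_fourier 1 n x).const_mul (a n)).congr_deriv ?_
  push_cast; ring

theorem integral_norm_sq_expSum (s : Finset ℕ) (a : ℕ → ℂ) :
    ∫ t, ‖expSum s a t‖ ^ 2 = ∑ n ∈ s, ‖a n‖ ^ 2 := by
  have hvol : (volume : Measure (AddCircle (1 : ℝ))) = AddCircle.haarAddCircle := by
    rw [AddCircle.volume_eq_smul_haarAddCircle, ENNReal.ofReal_one, one_smul]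
  have hexpand : ∀ t, (‖expSum s a t‖ ^ 2 : ℂ) = ∑ m ∈ s, ∑ n ∈ s,
      starRingEnd ℂ (a m) * a n * (fourier (-(m : ℤ)) t • fourier (n : ℤ) t) := fun t => by
    rw [← mul_conj', expSum, map_sum, Finset.sum_mul_sum, Finset.sum_comm]
    refine Finset.sum_congr rfl fun m _ => Finset.sum_congr rfl fun n _ => ?_
    rw [fourier_neg, smul_eq_mul, map_mul]; ring
  have hint : ∀ m n : ℕ, Integrable (fun t : AddCircle (1 : ℝ) =>
      starRingEnd ℂ (a m) * a n * (fourier (-(m : ℤ)) t • fourier (n : ℤ) t)) := fun m n =>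
    Continuous.integrable_of_hasCompactSupport (by fun_prop) (.of_compactSpace _)
  apply Complex.ofReal_injective
  rw [← integral_complex_ofReal]
  push_cast
  simp_rw [hexpand]
  rw [integral_finsetSum _ fun m _ => integrable_finsetSum _ fun n _ => hint m n]
  refine Finset.sum_congr rfl fun m hm => ?_
  rw [integral_finsetSum _ fun n _ => hint m n]
  have horth : ∀ n : ℕ, ∫ t, fourier (-(m : ℤ)) t • fourier (n : ℤ) t ∂AddCircle.haarAddCircle
      = if m = n then 1 else 0 := fun n => by
    change fourierCoeff (T := 1) (fourier (n : ℤ)) m = _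
    simp [fourierCoeff_fourier, Pi.single_apply]
  simp_rw [integral_const_mul, hvol, horth, mul_ite, mul_one, mul_zero, Finset.sum_ite_eq,
    if_pos hm, ← mul_conj', mul_comm]

theorem intervalIntegral_norm_sq_expSum_coe (s : Finset ℕ) (a : ℕ → ℂ) :
    ∫ x in (0 : ℝ)..1, ‖expSum s a x‖ ^ 2 = ∑ n ∈ s, ‖a n‖ ^ 2 := by
  rw [← integral_norm_sq_expSum, ← UnitAddCircle.intervalIntegral_preimage 0, zero_add]

theorem dist_coe_le_abs_sub (x y : ℝ) : dist (x : AddCircle (1 : ℝ)) y ≤ |x - y| := by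
  rw [dist_eq_norm, ← AddCircle.coe_sub]
  exact QuotientAddGroup.norm_mk_le_norm

theorem sum_sq_norm_coeff_deriv_le {N : ℕ} {s : Finset ℕ} (hs : ∀ n ∈ s, n ≤ N) (a : ℕ → ℂ) :
    ∑ n ∈ s, ‖2 * π * I * n * a n‖ ^ 2 ≤ (2 * π * N) ^ 2 * ∑ n ∈ s, ‖a n‖ ^ 2 := by
  rw [Finset.mul_sum]
  refine Finset.sum_le_sum fun n hn => ?_
  rw [← mul_pow]
  have : ‖2 * π * I * n * a n‖ = 2 * π * n * ‖a n‖ := by simp [abs_of_pos Real.pi_pos]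
  rw [this]
  gcongr
  exact_mod_cast hs n hn

theorem sum_sq_norm_expSum_le {N : ℕ} (hN : 0 < N) {s : Finset ℕ} (hs : ∀ n ∈ s, n ≤ N)
    (a : ℕ → ℂ) (E : Finset (AddCircle (1 : ℝ)))
    (hE : (E : Set (AddCircle (1 : ℝ))).Pairwise fun t u => 1 / N ≤ dist t u) :
    ∑ t ∈ E, ‖expSum s a t‖ ^ 2 ≤ 3 * (1 + 4 * π) * N * ∑ n ∈ s, ‖a n‖ ^ 2 := by
  set b : ℕ → ℂ := fun n => 2 * π * I * n * a n
  set S := ∑ n ∈ s, ‖a n‖ ^ 2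
  set A : ℝ := 2 * π * N
  have hA : 0 < A := by positivity
  have h2h : 2 * (2 * N : ℝ)⁻¹ = 1 / N := by field_simp
  let rep : AddCircle (1 : ℝ) → ℝ := fun t => (AddCircle.equivIco 1 0 t : ℝ)
  have hrep_mem : ∀ t, rep t ∈ Set.Ico 0 1 := fun t => by simpa using (AddCircle.equivIco 1 0 t).2
  have hrep_coe : ∀ t, (rep t : AddCircle (1 : ℝ)) = t := fun t => AddCircle.coe_equivIco
  have hsep : (E : Set (AddCircle (1 : ℝ))).Pairwise
      fun t u => 2 * (2 * N : ℝ)⁻¹ ≤ |rep t - rep u| := fun t ht u hu htu => by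
    have := dist_coe_le_abs_sub (rep t) (rep u)
    rw [hrep_coe, hrep_coe] at this
    exact h2h ▸ (hE ht hu htu).trans this
  have hgallagher := sum_sq_norm_le_integral_of_periodic (hasDerivAt_expSum_coe s a)
    (by fun_prop) (fun y => by simp) (fun y => by simp) E rep (fun t _ => hrep_mem t)
    (by positivity) (inv_le_one_of_one_le₀ (by norm_cast; omega)) hA hsep
  simp only [hrep_coe] at hgallagher
  rw [intervalIntegral.integral_add (Continuous.intervalIntegrable (by fun_prop) _ _)
    (Continuous.intervalIntegrable (by fun_prop) _ _), intervalIntegral.integral_const_mul,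
    intervalIntegral.integral_const_mul, intervalIntegral_norm_sq_expSum_coe,
    intervalIntegral_norm_sq_expSum_coe, h2h, one_div, inv_inv] at hgallagher
  have hderiv : A⁻¹ * ∑ n ∈ s, ‖b n‖ ^ 2 ≤ A * S := by
    rw [inv_mul_le_iff₀ hA, ← mul_assoc, ← sq]
    exact sum_sq_norm_coeff_deriv_le hs a
  calc ∑ t ∈ E, ‖expSum s a t‖ ^ 2 ≤ 3 * ((N + A) * S + A⁻¹ * ∑ n ∈ s, ‖b n‖ ^ 2) := hgallagher
    _ ≤ 3 * ((N + A) * S + A * S) := by linarith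
    _ = 3 * (1 + 4 * π) * N * S := by ring

theorem exists_separated_finset_subset_covering {X : Type*} [PseudoMetricSpace X] {S : Set X}
    {r : ℝ} (hr : 0 < r) {N : ℕ}
    (hN : ∀ E : Finset X, ↑E ⊆ S → (E : Set X).Pairwise (fun x y => r ≤ dist x y) → E.card ≤ N) :
    ∃ E : Finset X, ↑E ⊆ S ∧ (E : Set X).Pairwise (fun x y => r ≤ dist x y) ∧
      S ⊆ {x | ∃ y ∈ E, dist x y < r} := by
  classical
  let P : ℕ → Prop := fun k => ∃ E : Finset X,
    ↑E ⊆ S ∧ (E : Set X).Pairwise (fun x y => r ≤ dist x y) ∧ E.card = k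
  obtain ⟨E, hES, hsep, hcard⟩ : P (Nat.findGreatest P N) :=
    Nat.findGreatest_spec (Nat.zero_le N) ⟨∅, by simp, by simp, rfl⟩
  refine ⟨E, hES, hsep, fun x hx => ?_⟩
  change ∃ y ∈ E, dist x y < r
  by_contra! hfar
  have hxE : x ∉ E := fun hxE => (hfar x hxE).not_gt (by rwa [dist_self])
  have hbigger : P (Nat.findGreatest P N + 1) := by
    refine ⟨insert x E, ?_, ?_, by rw [Finset.card_insert_of_notMem hxE, hcard]⟩
    · simpa [Set.insert_subset_iff] using ⟨hx, hES⟩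
    · rw [Finset.coe_insert, Set.pairwise_insert]
      exact ⟨hsep, fun y hy _ => ⟨hfar y hy, dist_comm x y ▸ hfar y hy⟩⟩
  have hle : Nat.findGreatest P N + 1 ≤ N := by
    obtain ⟨E', hE'S, hE'sep, hE'card⟩ := hbigger
    exact hE'card ▸ hN E' hE'S hE'sep
  have := Nat.le_findGreatest hle hbigger
  omega

theorem card_le_of_separated_of_lt_norm_expSum {J : ℕ} (hJ : 1 ≤ J) {δ : ℝ} (hδ : 0 < δ)
    {ψ : ℕ → ℂ} (hψ : ∀ n ∈ Finset.Icc 1 J, ‖ψ n‖ ≤ 1) (E : Finset (AddCircle (1 : ℝ)))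
    (hEL : ∀ t ∈ E, δ * J < ‖expSum (Finset.Icc 1 J) ψ t‖)
    (hsep : (E : Set (AddCircle (1 : ℝ))).Pairwise fun t u => 1 / J ≤ dist t u) :
    (E.card : ℝ) ≤ 3 * (1 + 4 * π) / δ ^ 2 := by
  have hψ_sum : ∑ n ∈ Finset.Icc 1 J, ‖ψ n‖ ^ 2 ≤ J := by
    calc ∑ n ∈ Finset.Icc 1 J, ‖ψ n‖ ^ 2 ≤ ∑ n ∈ Finset.Icc 1 J, (1 : ℝ) :=
          Finset.sum_le_sum fun n hn => pow_le_one₀ (norm_nonneg _) (hψ n hn)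
      _ = J := by simp
  have hsieve := sum_sq_norm_expSum_le hJ (s := Finset.Icc 1 J)
    (fun n hn => (Finset.mem_Icc.1 hn).2) ψ E hsep
  have hlower : (E.card : ℝ) * (δ * J) ^ 2 ≤ ∑ t ∈ E, ‖expSum (Finset.Icc 1 J) ψ t‖ ^ 2 := by
    rw [← nsmul_eq_mul, ← Finset.sum_const]
    exact Finset.sum_le_sum fun t ht => pow_le_pow_left₀ (by positivity) (hEL t ht).le 2
  rw [le_div_iff₀ (by positivity)]
  have : (E.card : ℝ) * δ ^ 2 * J ^ 2 ≤ 3 * (1 + 4 * π) * J ^ 2 := calc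
    _ = (E.card : ℝ) * (δ * J) ^ 2 := by ring
    _ ≤ 3 * (1 + 4 * π) * J * ∑ n ∈ Finset.Icc 1 J, ‖ψ n‖ ^ 2 := hlower.trans hsieve
    _ ≤ 3 * (1 + 4 * π) * J * J := by gcongr
    _ = _ := by ring
  exact le_of_mul_le_mul_right this (by positivity)

/-- Marcinkiewicz–Zygmund-type level set localization: there are absolute constants
`c, C > 0` such that for every `J ≥ 1`, `δ > 0` and 1-bounded `ψ : {1,…,J} → ℂ`, there
is a finite set `E₀` in the circle `𝕋 = ℝ/ℤ` whose points are `c/J`-separated, with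
`|E₀| ≤ C δ⁻²`, and such that the level set
`{λ : |∑_{n=1}^J ψ(n) e^{2πinλ}| > δJ}` is contained in the `c/J`-neighbourhood of `E₀`. -/
theorem level_set_in_neighbourhood_of_separated_set :
    ∃ c : ℝ, 0 < c ∧ ∃ C : ℝ, 0 < C ∧
      ∀ (J : ℕ), 1 ≤ J → ∀ (δ : ℝ), 0 < δ → ∀ ψ : ℕ → ℂ,
        (∀ n ∈ Finset.Icc 1 J, ‖ψ n‖ ≤ 1) →
        ∃ E₀ : Finset (AddCircle (1 : ℝ)),
          (∀ lam ∈ E₀, ∀ gam ∈ E₀, lam ≠ gam → c / J ≤ dist lam gam) ∧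
          (E₀.card : ℝ) ≤ C / δ ^ 2 ∧
          {lam : AddCircle (1 : ℝ) |
              δ * J < ‖∑ n ∈ Finset.Icc 1 J, ψ n * fourier (n : ℤ) lam‖}
            ⊆ {lam : AddCircle (1 : ℝ) | ∃ gam ∈ E₀, dist lam gam < c / J} := by
  refine ⟨1, one_pos, 3 * (1 + 4 * π), by positivity, fun J hJ δ hδ ψ hψ => ?_⟩
  have hcard := fun E hEL hsep => card_le_of_separated_of_lt_norm_expSum hJ hδ hψ E hEL hsep
  obtain ⟨E₀, hEL, hsep, hcover⟩ := exists_separated_finset_subset_covering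
    (S := {t | δ * J < ‖expSum (Finset.Icc 1 J) ψ t‖}) (r := 1 / J) (by positivity)
    (N := ⌊3 * (1 + 4 * π) / δ ^ 2⌋₊) fun E hEL hsep => Nat.le_floor (hcard E hEL hsep)
  exact ⟨E₀, hsep, hcard E₀ hEL hsep, hcover⟩
end
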